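/- arXiv:0710.5014 — 9 statements merged into one kernel-verified Lean document; each statement's English description precedes it below -/
import Mathlib

section
/- Fix an integer k ≥ 3 and an integer n ≥ 1. The map ϑ sending a set A of arcs to {(i, j−1) : (i, j) ∈ A} is a well-defined bijection from the set of k-noncrossing partition diagrams on [n] onto the set of k-noncrossing braid diagrams on [n−1]. In particular, for every k-noncrossing partition diagram A on [n] and all i < j, (i, j) ∈ A if and only if (i, j−1) ∈ ϑ(A). -/
/-- A partition diagram on `[n] = {1,…,n}`: a set of arcs `(i,j)` with `1 ≤ i < j ≤ n`
such that every vertex is the left endpoint of at most one arc and the right endpoint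
of at most one arc. -/
def IsPartitionDiagram (n : ℕ) (A : Finset (ℕ × ℕ)) : Prop :=
  (∀ p ∈ A, 1 ≤ p.1 ∧ p.1 < p.2 ∧ p.2 ≤ n) ∧
  (∀ p ∈ A, ∀ q ∈ A, p.1 = q.1 → p = q) ∧
  (∀ p ∈ A, ∀ q ∈ A, p.2 = q.2 → p = q)

/-- A braid diagram on `[n]`: a set of pairs `(i,j)` with `1 ≤ i ≤ j ≤ n`
such that every vertex is the first coordinate of at most one element and the second
coordinate of at most one element. -/
def IsBraidDiagram (n : ℕ) (B : Finset (ℕ × ℕ)) : Prop :=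
  (∀ p ∈ B, 1 ≤ p.1 ∧ p.1 ≤ p.2 ∧ p.2 ≤ n) ∧
  (∀ p ∈ B, ∀ q ∈ B, p.1 = q.1 → p = q) ∧
  (∀ p ∈ B, ∀ q ∈ B, p.2 = q.2 → p = q)

/-- `A` contains `k` arcs `(i₁,j₁),…,(i_k,j_k)` with `i₁<⋯<i_k<j₁<⋯<j_k`. -/
def HasKCrossing (k : ℕ) (A : Finset (ℕ × ℕ)) : Prop :=
  ∃ f : Fin k → ℕ × ℕ, (∀ s, f s ∈ A) ∧
    StrictMono (fun s => (f s).1) ∧ StrictMono (fun s => (f s).2) ∧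
    ∀ s t : Fin k, (f s).1 < (f t).2

/-- `A` contains `k` elements `(i₁,j₁),…,(i_k,j_k)` with `i₁<⋯<i_k ≤ j₁<⋯<j_k`. -/
def HasEnhancedKCrossing (k : ℕ) (A : Finset (ℕ × ℕ)) : Prop :=
  ∃ f : Fin k → ℕ × ℕ, (∀ s, f s ∈ A) ∧
    StrictMono (fun s => (f s).1) ∧ StrictMono (fun s => (f s).2) ∧
    ∀ s t : Fin k, (f s).1 ≤ (f t).2

/-- The map `ϑ` sending a set of arcs `A` to `{(i, j-1) : (i,j) ∈ A}`. -/
def vartheta (A : Finset (ℕ × ℕ)) : Finset (ℕ × ℕ) :=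
  A.image (fun p => (p.1, p.2 - 1))

/-!
Shifting right endpoints down by one turns the strict inequality `i < j` between the left
endpoint of one arc and the right endpoint of another into the weak `i ≤ j - 1`. Right
endpoints are positive, so the truncated subtraction loses nothing and the shift is inverted
by `(i, j) ↦ (i, j + 1)`. Under this inverse the conditions
defining a braid diagram on `[n - 1]` and an enhanced `k`-crossing become exactly those of a
partition diagram on `[n]` and a `k`-crossing.
-/

def varthetaInv (B : Finset (ℕ × ℕ)) : Finset (ℕ × ℕ) :=
  B.image fun p => (p.1, p.2 + 1)

lemma vartheta_varthetaInv (B : Finset (ℕ × ℕ)) : vartheta (varthetaInv B) = B := by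
  simp [vartheta, varthetaInv, Finset.image_image, Function.comp_def]

lemma varthetaInv_vartheta {A : Finset (ℕ × ℕ)} (hA : ∀ p ∈ A, 0 < p.2) :
    varthetaInv (vartheta A) = A := by
  rw [varthetaInv, vartheta, Finset.image_image]
  conv_rhs => rw [← Finset.image_id (s := A)]
  exact Finset.image_congr fun p hp => Prod.ext rfl (Nat.sub_add_cancel (hA p hp))

lemma mem_varthetaInv {B : Finset (ℕ × ℕ)} {i j : ℕ} :
    (i, j + 1) ∈ varthetaInv B ↔ (i, j) ∈ B := by
  refine Function.Injective.mem_finset_image (s := B) (a := (i, j))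
    (f := fun p => (p.1, p.2 + 1)) fun p q h => ?_
  simpa [Prod.ext_iff] using h

lemma isPartitionDiagram_varthetaInv_iff {n : ℕ} {B : Finset (ℕ × ℕ)} :
    IsPartitionDiagram n (varthetaInv B) ↔ IsBraidDiagram (n - 1) B := by
  simp only [IsPartitionDiagram, IsBraidDiagram, varthetaInv, Finset.forall_mem_image,
    Prod.ext_iff, Nat.add_right_cancel_iff]
  refine and_congr (forall₂_congr fun p _ => ?_) Iff.rfl
  omega

lemma hasKCrossing_varthetaInv_iff {k : ℕ} {B : Finset (ℕ × ℕ)} :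
    HasKCrossing k (varthetaInv B) ↔ HasEnhancedKCrossing k B := by
  constructor
  · rintro ⟨g, hg, h1, h2, h3⟩
    choose f hf hfg using fun s => Finset.mem_image.mp (hg s)
    obtain rfl : g = fun s => ((f s).1, (f s).2 + 1) := funext fun s => (hfg s).symm
    exact ⟨f, hf, h1, fun a b hab => Nat.succ_lt_succ_iff.mp (h2 hab),
      fun s t => Nat.lt_succ_iff.mp (h3 s t)⟩
  · rintro ⟨f, hf, h1, h2, h3⟩
    exact ⟨fun s => ((f s).1, (f s).2 + 1), fun s => Finset.mem_image_of_mem _ (hf s), h1,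
      fun a b hab => Nat.succ_lt_succ (h2 hab), fun s t => Nat.lt_succ_of_le (h3 s t)⟩

lemma IsPartitionDiagram.varthetaInv_vartheta {n : ℕ} {A : Finset (ℕ × ℕ)}
    (hA : IsPartitionDiagram n A) : varthetaInv (vartheta A) = A :=
  _root_.varthetaInv_vartheta fun p hp => by have := hA.1 p hp; omega

theorem vartheta_bijOn_partitions_braids_general (k n : ℕ) :
    Set.BijOn vartheta
      {A : Finset (ℕ × ℕ) | IsPartitionDiagram n A ∧ ¬ HasKCrossing k A}
      {B : Finset (ℕ × ℕ) | IsBraidDiagram (n - 1) B ∧ ¬ HasEnhancedKCrossing k B} ∧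
    ∀ A : Finset (ℕ × ℕ), IsPartitionDiagram n A → ¬ HasKCrossing k A →
      ∀ i j : ℕ, i < j → ((i, j) ∈ A ↔ (i, j - 1) ∈ vartheta A) := by
  refine ⟨Set.InvOn.bijOn (f' := varthetaInv)
    ⟨fun A hA => hA.1.varthetaInv_vartheta, fun B _ => vartheta_varthetaInv B⟩ ?_ ?_, ?_⟩
  · rintro A ⟨hA, hA_nc⟩
    have hA_inv := hA.varthetaInv_vartheta
    rw [← hA_inv] at hA hA_nc
    exact ⟨isPartitionDiagram_varthetaInv_iff.mp hA, hasKCrossing_varthetaInv_iff.not.mp hA_nc⟩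
  · rintro B ⟨hB, hB_nc⟩
    exact ⟨isPartitionDiagram_varthetaInv_iff.mpr hB, hasKCrossing_varthetaInv_iff.not.mpr hB_nc⟩
  · intro A hA _ i j hij
    obtain ⟨j, rfl⟩ : ∃ j', j = j' + 1 := ⟨j - 1, by omega⟩
    conv_lhs => rw [← hA.varthetaInv_vartheta]
    exact mem_varthetaInv

/-- `ϑ` is a well-defined bijection from the `k`-noncrossing partition diagrams on `[n]`
onto the `k`-noncrossing braid diagrams on `[n-1]`, and for every `k`-noncrossing
partition diagram `A` on `[n]` and all `i < j`, `(i,j) ∈ A ↔ (i,j-1) ∈ ϑ(A)`. -/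
theorem vartheta_bijOn_partitions_braids (k n : ℕ) (hk : 3 ≤ k) (hn : 1 ≤ n) :
    Set.BijOn vartheta
      {A : Finset (ℕ × ℕ) | IsPartitionDiagram n A ∧ ¬ HasKCrossing k A}
      {B : Finset (ℕ × ℕ) | IsBraidDiagram (n - 1) B ∧ ¬ HasEnhancedKCrossing k B} ∧
    ∀ A : Finset (ℕ × ℕ), IsPartitionDiagram n A → ¬ HasKCrossing k A →
      ∀ i j : ℕ, i < j → ((i, j) ∈ A ↔ (i, j - 1) ∈ vartheta A) :=
  vartheta_bijOn_partitions_braids_general k n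
end

section
/- Fix an integer k ≥ 3 and an integer n ≥ 1. The map sending a set A of arcs to {(i, j−1) : (i, j) ∈ A} is a well-defined bijection from the set of 2-regular k-noncrossing partition diagrams on [n] onto the set of enhanced k-noncrossing partition diagrams on [n−1]. -/
/-- A partition diagram is 2-regular if it contains no arc `(i, i+1)`. -/
def TwoRegular (A : Finset (ℕ × ℕ)) : Prop := ∀ i : ℕ, (i, i + 1) ∉ A

/-!
`vartheta` lowers every right endpoint by one; its inverse `shiftArcs` raises them. Raising
turns `i ≤ j` into `i < j + 1`, so the enhanced `k`-crossings of `B` are exactly the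
`k`-crossings of `shiftArcs B`, and the loops `(i, i)` of `B` (which a partition diagram on
`[n - 1]` cannot contain) become the arcs `(i, i + 1)` that 2-regularity forbids.
-/

def shiftArcs (B : Finset (ℕ × ℕ)) : Finset (ℕ × ℕ) :=
  B.image (fun p => (p.1, p.2 + 1))

lemma mem_shiftArcs {B : Finset (ℕ × ℕ)} {p : ℕ × ℕ} :
    p ∈ shiftArcs B ↔ 0 < p.2 ∧ (p.1, p.2 - 1) ∈ B := by
  obtain ⟨i, j⟩ := p
  constructor
  · rintro hp
    obtain ⟨⟨i', j'⟩, hq, ⟨⟩⟩ := Finset.mem_image.mp hp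
    simpa using hq
  · rintro ⟨hj, hp⟩
    exact Finset.mem_image.mpr ⟨_, hp, Prod.ext rfl (Nat.sub_add_cancel hj)⟩

lemma vartheta_shiftArcs (B : Finset (ℕ × ℕ)) : vartheta (shiftArcs B) = B := by
  simp [vartheta, shiftArcs, Finset.image_image, Function.comp_def]

lemma shiftArcs_vartheta {A : Finset (ℕ × ℕ)} (hA : ∀ p ∈ A, 0 < p.2) :
    shiftArcs (vartheta A) = A := by
  rw [shiftArcs, vartheta, Finset.image_image]
  refine (Finset.image_congr fun p hp => ?_).trans Finset.image_id'
  exact Prod.ext rfl (Nat.sub_add_cancel (hA p hp))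

lemma hasKCrossing_shiftArcs_iff {k : ℕ} {B : Finset (ℕ × ℕ)} :
    HasKCrossing k (shiftArcs B) ↔ HasEnhancedKCrossing k B := by
  constructor
  · rintro ⟨f, hf, hm₁, hm₂, hlt⟩
    have hpos : ∀ s, 0 < (f s).2 := fun s => (mem_shiftArcs.mp (hf s)).1
    refine ⟨fun s => ((f s).1, (f s).2 - 1), fun s => (mem_shiftArcs.mp (hf s)).2, hm₁,
      fun s t hst => ?_, fun s t => ?_⟩
    · exact Nat.sub_lt_sub_right (hpos s) (hm₂ hst)
    · have := hlt s t
      show (f s).1 ≤ (f t).2 - 1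
      omega
  · rintro ⟨f, hf, hm₁, hm₂, hle⟩
    exact ⟨fun s => ((f s).1, (f s).2 + 1), fun s => Finset.mem_image_of_mem _ (hf s), hm₁,
      fun s t hst => Nat.succ_lt_succ (hm₂ hst), fun s t => Nat.lt_succ_of_le (hle s t)⟩

lemma twoRegular_shiftArcs_iff {B : Finset (ℕ × ℕ)} :
    TwoRegular (shiftArcs B) ↔ ∀ i, (i, i) ∉ B := by
  simp [TwoRegular, shiftArcs]

lemma isPartitionDiagram_shiftArcs_iff {n : ℕ} {B : Finset (ℕ × ℕ)} :
    IsPartitionDiagram n (shiftArcs B) ∧ TwoRegular (shiftArcs B) ↔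
      IsPartitionDiagram (n - 1) B := by
  have hbounds : ((∀ p ∈ B, 1 ≤ p.1 ∧ p.1 < p.2 + 1 ∧ p.2 + 1 ≤ n) ∧ ∀ i, (i, i) ∉ B) ↔
      ∀ p ∈ B, 1 ≤ p.1 ∧ p.1 < p.2 ∧ p.2 ≤ n - 1 := by
    constructor
    · rintro ⟨hb, hloop⟩ ⟨i, j⟩ hp
      have := hb _ hp
      have : i ≠ j := by rintro rfl; exact hloop i hp
      omega
    · intro hb
      exact ⟨fun p hp => by have := hb p hp; omega, fun i hi => by have := hb _ hi; omega⟩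
  rw [twoRegular_shiftArcs_iff]
  simp only [IsPartitionDiagram, shiftArcs, Finset.forall_mem_image, Prod.ext_iff, add_left_inj]
  rw [← hbounds]
  tauto

theorem vartheta_bijOn_twoRegular_enhanced_general (k n : ℕ) :
    Set.BijOn vartheta
      {A : Finset (ℕ × ℕ) | IsPartitionDiagram n A ∧ ¬ HasKCrossing k A ∧ TwoRegular A}
      {B : Finset (ℕ × ℕ) | IsPartitionDiagram (n - 1) B ∧ ¬ HasEnhancedKCrossing k B} := by
  have hpos : ∀ A, IsPartitionDiagram n A → ∀ p ∈ A, 0 < p.2 := fun A hA p hp => by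
    have := hA.1 p hp
    omega
  have hinv : Set.InvOn shiftArcs vartheta
      {A | IsPartitionDiagram n A ∧ ¬ HasKCrossing k A ∧ TwoRegular A}
      {B | IsPartitionDiagram (n - 1) B ∧ ¬ HasEnhancedKCrossing k B} :=
    ⟨fun A hA => shiftArcs_vartheta (hpos A hA.1), fun B _ => vartheta_shiftArcs B⟩
  refine hinv.bijOn (fun A hA => ?_) (fun B ⟨hB, hcross⟩ => ?_)
  · obtain ⟨hA, hcross, hreg⟩ := hA
    have hshift := shiftArcs_vartheta (hpos A hA)
    rw [← hshift] at hA hcross hreg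
    exact ⟨isPartitionDiagram_shiftArcs_iff.mp ⟨hA, hreg⟩, hasKCrossing_shiftArcs_iff.not.mp hcross⟩
  · obtain ⟨hdiag, hreg⟩ := isPartitionDiagram_shiftArcs_iff.mpr hB
    exact ⟨hdiag, hasKCrossing_shiftArcs_iff.not.mpr hcross, hreg⟩

/-- The map `ϑ : A ↦ {(i,j-1) : (i,j) ∈ A}` is a well-defined bijection from the
2-regular `k`-noncrossing partition diagrams on `[n]` onto the enhanced
`k`-noncrossing partition diagrams on `[n-1]`. -/
theorem vartheta_bijOn_twoRegular_enhanced (k n : ℕ) (hk : 3 ≤ k) (hn : 1 ≤ n) :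
    Set.BijOn vartheta
      {A : Finset (ℕ × ℕ) | IsPartitionDiagram n A ∧ ¬ HasKCrossing k A ∧ TwoRegular A}
      {B : Finset (ℕ × ℕ) | IsPartitionDiagram (n - 1) B ∧ ¬ HasEnhancedKCrossing k B} :=
  vartheta_bijOn_twoRegular_enhanced_general k n
end

section
/- Fix an integer k ≥ 3 and an integer n ≥ 1. If A is a 2-regular k-noncrossing partition diagram on [n], then the set A' = {(i, j−1) : (i, j) ∈ A} is an enhanced k-noncrossing partition diagram on [n−1]. -/
theorem TwoRegular.add_two_le {n : ℕ} {A : Finset (ℕ × ℕ)} (hreg : TwoRegular A)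
    (hA : IsPartitionDiagram n A) {p : ℕ × ℕ} (hp : p ∈ A) : p.1 + 2 ≤ p.2 := by
  have hlt := (hA.1 p hp).2.1
  by_contra! hle
  have hsucc : (p.1, p.1 + 1) = p := Prod.ext rfl (by omega)
  exact hreg p.1 (hsucc ▸ hp)

theorem isPartitionDiagram_vartheta {n : ℕ} {A : Finset (ℕ × ℕ)} (hA : IsPartitionDiagram n A)
    (hreg : TwoRegular A) : IsPartitionDiagram (n - 1) (vartheta A) := by
  have hgap : ∀ p ∈ A, p.1 + 2 ≤ p.2 := fun p hp => hreg.add_two_le hA hp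
  obtain ⟨hbound, hleft, hright⟩ := hA
  simp only [IsPartitionDiagram, vartheta, Finset.forall_mem_image, Prod.mk.injEq]
  refine ⟨fun p hp => ?_, fun p hp q hq h1 => ?_, fun p hp q hq h2 => ?_⟩
  · have := hbound p hp
    have := hgap p hp
    omega
  · rw [hleft p hp q hq h1]
    exact ⟨rfl, rfl⟩
  · have := hgap p hp
    have := hgap q hq
    rw [hright p hp q hq (by omega)]
    exact ⟨rfl, rfl⟩

theorem HasEnhancedKCrossing.hasKCrossing_of_vartheta {k : ℕ} {A : Finset (ℕ × ℕ)}
    (hpos : ∀ p ∈ A, 0 < p.2) (hcr : HasEnhancedKCrossing k (vartheta A)) :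
    HasKCrossing k A := by
  obtain ⟨f, hfA, hmono₁, hmono₂, hle⟩ := hcr
  have hlift : ∀ s, ∃ q ∈ A, (q.1, q.2 - 1) = f s := fun s => Finset.mem_image.mp (hfA s)
  choose g hgA hgf using hlift
  have hg₁ : ∀ s, (g s).1 = (f s).1 := fun s => by rw [← hgf s]
  have hg₂ : ∀ s, (g s).2 - 1 = (f s).2 := fun s => by rw [← hgf s]
  refine ⟨g, hgA, fun s t hst => ?_, fun s t hst => ?_, fun s t => ?_⟩
  · simpa only [hg₁] using hmono₁ hst
  · have hlt : (g s).2 - 1 < (g t).2 - 1 := by simpa only [hg₂] using hmono₂ hst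
    exact lt_of_tsub_lt_tsub_right hlt
  · have hst : (g s).1 ≤ (g t).2 - 1 := by simpa only [hg₁, hg₂] using hle s t
    exact Nat.le_sub_one_iff_lt (hpos (g t) (hgA t)) |>.mp hst

theorem vartheta_mem_enhanced_general (k n : ℕ)
    (A : Finset (ℕ × ℕ)) (hA : IsPartitionDiagram n A) (hcr : ¬ HasKCrossing k A)
    (hreg : TwoRegular A) :
    IsPartitionDiagram (n - 1) (vartheta A) ∧ ¬ HasEnhancedKCrossing k (vartheta A) :=
  ⟨isPartitionDiagram_vartheta hA hreg, fun henh =>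
    hcr (henh.hasKCrossing_of_vartheta fun _ hp => Nat.zero_lt_of_lt (hA.1 _ hp).2.1)⟩

/-- If `A` is a 2-regular `k`-noncrossing partition diagram on `[n]`, then
`A' = {(i,j-1) : (i,j) ∈ A}` is an enhanced `k`-noncrossing partition diagram on `[n-1]`. -/
theorem vartheta_mem_enhanced (k n : ℕ) (hk : 3 ≤ k) (hn : 1 ≤ n)
    (A : Finset (ℕ × ℕ)) (hA : IsPartitionDiagram n A) (hcr : ¬ HasKCrossing k A)
    (hreg : TwoRegular A) :
    IsPartitionDiagram (n - 1) (vartheta A) ∧ ¬ HasEnhancedKCrossing k (vartheta A) :=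
  vartheta_mem_enhanced_general k n A hA hcr hreg
end

section
/- Fix an integer k ≥ 3 and an integer n ≥ 1. If B is an enhanced k-noncrossing partition diagram on [n−1], then the set A = {(i, j+1) : (i, j) ∈ B} is a 2-regular k-noncrossing partition diagram on [n]. -/
/-! Raising every right endpoint by one turns the weak inequality `i_k ≤ j₁` of an enhanced
crossing into the strict `i_k < j₁ + 1`, so a `k`-crossing of the shifted diagram shifts back to
an enhanced `k`-crossing of `B`. Since `B` has no loops `(i, i)`, no arc `(i, i+1)` is created. -/

/-- The inverse of `vartheta` on braid diagrams. -/
def shiftUp (B : Finset (ℕ × ℕ)) : Finset (ℕ × ℕ) :=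
  B.image fun p => (p.1, p.2 + 1)

theorem mem_shiftUp {B : Finset (ℕ × ℕ)} {p : ℕ × ℕ} :
    p ∈ shiftUp B ↔ 1 ≤ p.2 ∧ (p.1, p.2 - 1) ∈ B := by
  obtain ⟨i, j⟩ := p
  constructor
  · rintro hp
    obtain ⟨⟨a, b⟩, hab, he⟩ := Finset.mem_image.mp hp
    simp only [Prod.mk.injEq] at he
    obtain ⟨rfl, rfl⟩ := he
    simpa using hab
  · rintro ⟨hj, hp⟩
    exact Finset.mem_image.mpr ⟨_, hp, by simp only [Nat.sub_add_cancel hj]⟩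

theorem IsPartitionDiagram.isBraidDiagram {n : ℕ} {A : Finset (ℕ × ℕ)}
    (hA : IsPartitionDiagram n A) : IsBraidDiagram n A := by
  obtain ⟨hbound, hleft, hright⟩ := hA
  exact ⟨fun p hp => (hbound p hp).imp_right fun h => h.imp_left le_of_lt, hleft, hright⟩

theorem IsBraidDiagram.isPartitionDiagram_shiftUp {n : ℕ} {B : Finset (ℕ × ℕ)}
    (hB : IsBraidDiagram (n - 1) B) : IsPartitionDiagram n (shiftUp B) := by
  obtain ⟨hbound, hleft, hright⟩ := hB
  refine ⟨?_, ?_, ?_⟩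
  · intro p hp
    obtain ⟨q, hq, rfl⟩ := Finset.mem_image.mp hp
    have := hbound q hq
    exact ⟨this.1, by omega, by omega⟩
  · intro p hp q hq h
    obtain ⟨p', hp', rfl⟩ := Finset.mem_image.mp hp
    obtain ⟨q', hq', rfl⟩ := Finset.mem_image.mp hq
    rw [hleft p' hp' q' hq' h]
  · intro p hp q hq h
    obtain ⟨p', hp', rfl⟩ := Finset.mem_image.mp hp
    obtain ⟨q', hq', rfl⟩ := Finset.mem_image.mp hq
    rw [hright p' hp' q' hq' (Nat.succ_injective h)]

theorem HasKCrossing.hasEnhancedKCrossing_of_shiftUp {k : ℕ} {B : Finset (ℕ × ℕ)}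
    (h : HasKCrossing k (shiftUp B)) : HasEnhancedKCrossing k B := by
  obtain ⟨f, hf, hmono₁, hmono₂, hcross⟩ := h
  have hpos : ∀ s, 1 ≤ (f s).2 := fun s => (mem_shiftUp.mp (hf s)).1
  refine ⟨fun s => ((f s).1, (f s).2 - 1), fun s => (mem_shiftUp.mp (hf s)).2, hmono₁,
    fun s t hst => ?_, fun s t => ?_⟩
  · have := hmono₂ hst
    have := hpos s
    dsimp only at *
    omega
  · have := hcross s t
    dsimp only
    omega

theorem twoRegular_shiftUp {B : Finset (ℕ × ℕ)} (hB : ∀ p ∈ B, p.1 < p.2) :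
    TwoRegular (shiftUp B) := by
  intro i hi
  have := hB _ (mem_shiftUp.mp hi).2
  dsimp only at this
  omega

theorem shift_up_mem_twoRegular_general (k n : ℕ)
    (B : Finset (ℕ × ℕ)) (hB : IsPartitionDiagram (n - 1) B)
    (hcr : ¬ HasEnhancedKCrossing k B) :
    IsPartitionDiagram n (B.image (fun p => (p.1, p.2 + 1))) ∧
    ¬ HasKCrossing k (B.image (fun p => (p.1, p.2 + 1))) ∧
    TwoRegular (B.image (fun p => (p.1, p.2 + 1))) := by
  exact ⟨hB.isBraidDiagram.isPartitionDiagram_shiftUp,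
    fun h => hcr (HasKCrossing.hasEnhancedKCrossing_of_shiftUp h),
    twoRegular_shiftUp fun p hp => (hB.1 p hp).2.1⟩

/-- If `B` is an enhanced `k`-noncrossing partition diagram on `[n-1]`, then
`A = {(i,j+1) : (i,j) ∈ B}` is a 2-regular `k`-noncrossing partition diagram on `[n]`. -/
theorem shift_up_mem_twoRegular (k n : ℕ) (hk : 3 ≤ k) (hn : 1 ≤ n)
    (B : Finset (ℕ × ℕ)) (hB : IsPartitionDiagram (n - 1) B)
    (hcr : ¬ HasEnhancedKCrossing k B) :
    IsPartitionDiagram n (B.image (fun p => (p.1, p.2 + 1))) ∧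
    ¬ HasKCrossing k (B.image (fun p => (p.1, p.2 + 1))) ∧
    TwoRegular (B.image (fun p => (p.1, p.2 + 1))) :=
  shift_up_mem_twoRegular_general k n B hB hcr
end

section
/- Fix an integer k ≥ 3 and n ∈ ℕ. The map sending a braid diagram B on [n] to the set of its non-loop elements {(i,j) ∈ B : i < j} is a bijection from the set of k-noncrossing braid diagrams on [n] having no isolated vertex onto the set of enhanced k-noncrossing partition diagrams on [n]. -/
/-- `v ∈ [n]` has no isolated vertex in `B`: every `v ∈ [n]` occurs in some element of `B`. -/
def NoIsolatedVertex (n : ℕ) (B : Finset (ℕ × ℕ)) : Prop :=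
  ∀ v : ℕ, 1 ≤ v → v ≤ n → ∃ p ∈ B, p.1 = v ∨ p.2 = v

/-
The inverse map adds a loop `(v, v)` at every vertex `v ∈ [n]` that no arc touches.
A braid diagram without isolated vertices is recovered from its arcs this way, because a loop
at `v` excludes every other element touching `v`. For `k ≥ 2` no loop `(v, v)` can occur in an
enhanced `k`-crossing: any other member `(i, j)` of it satisfies `v < i ≤ v` or `v ≤ j < v`.
So adding or removing loops does not affect enhanced `k`-noncrossingness.
-/

open Finset

def nonLoops (B : Finset (ℕ × ℕ)) : Finset (ℕ × ℕ) :=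
  B.filter fun p => p.1 < p.2

def isolatedVertices (n : ℕ) (A : Finset (ℕ × ℕ)) : Finset ℕ :=
  (Icc 1 n).filter fun v => ∀ p ∈ A, p.1 ≠ v ∧ p.2 ≠ v

def addLoops (n : ℕ) (A : Finset (ℕ × ℕ)) : Finset (ℕ × ℕ) :=
  A ∪ (isolatedVertices n A).image fun v => (v, v)

section

variable {k n v : ℕ} {A B : Finset (ℕ × ℕ)} {p : ℕ × ℕ}

lemma mem_nonLoops : p ∈ nonLoops B ↔ p ∈ B ∧ p.1 < p.2 :=
  mem_filter

lemma mem_isolatedVertices :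
    v ∈ isolatedVertices n A ↔ 1 ≤ v ∧ v ≤ n ∧ ∀ p ∈ A, p.1 ≠ v ∧ p.2 ≠ v := by
  simp only [isolatedVertices, mem_filter, mem_Icc, and_assoc]

lemma mem_addLoops :
    p ∈ addLoops n A ↔ p ∈ A ∨ (p.1 = p.2 ∧ p.1 ∈ isolatedVertices n A) := by
  obtain ⟨a, b⟩ := p
  simp only [addLoops, mem_union, mem_image, Prod.mk.injEq]
  constructor
  · rintro (h | ⟨v, hv, rfl, rfl⟩)
    exacts [.inl h, .inr ⟨rfl, hv⟩]
  · rintro (h | ⟨rfl, hv⟩)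
    exacts [.inl h, .inr ⟨a, hv, rfl, rfl⟩]

lemma HasEnhancedKCrossing.mono (hAB : A ⊆ B)
    (h : HasEnhancedKCrossing k A) : HasEnhancedKCrossing k B :=
  let ⟨f, hf, hf₁, hf₂, hle⟩ := h
  ⟨f, fun s => hAB (hf s), hf₁, hf₂, hle⟩

lemma HasEnhancedKCrossing.nonLoops (hk : 2 ≤ k)
    (h : HasEnhancedKCrossing k B) : HasEnhancedKCrossing k (nonLoops B) := by
  obtain ⟨f, hf, hf₁, hf₂, hle⟩ := h
  have : Nontrivial (Fin k) := Fin.nontrivial_iff_two_le.mpr hk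
  have hloopFree (r : Fin k) : (f r).1 < (f r).2 := by
    obtain ⟨s, hs⟩ := exists_ne r
    rcases hs.lt_or_gt with hsr | hrs
    · exact (hle r s).trans_lt (hf₂ hsr)
    · exact (hf₁ hrs).trans_le (hle s r)
  exact ⟨f, fun r => mem_nonLoops.mpr ⟨hf r, hloopFree r⟩, hf₁, hf₂, hle⟩

lemma IsBraidDiagram.isPartitionDiagram_nonLoops (hB : IsBraidDiagram n B) :
    IsPartitionDiagram n (nonLoops B) := by
  obtain ⟨hrange, hfst, hsnd⟩ := hB
  refine ⟨fun p hp => ?_, fun p hp q hq => ?_, fun p hp q hq => ?_⟩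
  · obtain ⟨hpB, hlt⟩ := mem_nonLoops.mp hp
    exact ⟨(hrange p hpB).1, hlt, (hrange p hpB).2.2⟩
  · exact hfst p (mem_nonLoops.mp hp).1 q (mem_nonLoops.mp hq).1
  · exact hsnd p (mem_nonLoops.mp hp).1 q (mem_nonLoops.mp hq).1

lemma IsPartitionDiagram.isBraidDiagram_addLoops (hA : IsPartitionDiagram n A) :
    IsBraidDiagram n (addLoops n A) := by
  obtain ⟨hrange, hfst, hsnd⟩ := hA
  refine ⟨fun p hp => ?_, fun p hp q hq => ?_, fun p hp q hq => ?_⟩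
  · rcases mem_addLoops.mp hp with hpA | ⟨hloop, hv⟩
    · exact ⟨(hrange p hpA).1, (hrange p hpA).2.1.le, (hrange p hpA).2.2⟩
    · obtain ⟨h1, hn, -⟩ := mem_isolatedVertices.mp hv
      exact ⟨h1, hloop.le, hloop ▸ hn⟩
  all_goals
    intro hpq
    rcases mem_addLoops.mp hp with hpA | ⟨hp_loop, hp_iso⟩ <;>
      rcases mem_addLoops.mp hq with hqA | ⟨hq_loop, hq_iso⟩
    · first | exact hfst p hpA q hqA hpq | exact hsnd p hpA q hqA hpq
    · have := (mem_isolatedVertices.mp hq_iso).2.2 p hpA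
      omega
    · have := (mem_isolatedVertices.mp hp_iso).2.2 q hqA
      omega
    · exact Prod.ext (by omega) (by omega)

lemma noIsolatedVertex_addLoops : NoIsolatedVertex n (addLoops n A) := by
  intro v h1 hn
  by_cases hv : v ∈ isolatedVertices n A
  · exact ⟨(v, v), mem_addLoops.mpr (.inr ⟨rfl, hv⟩), .inl rfl⟩
  · rw [mem_isolatedVertices] at hv
    push Not at hv
    obtain ⟨p, hpA, hpv⟩ := hv h1 hn
    exact ⟨p, mem_addLoops.mpr (.inl hpA), or_iff_not_imp_left.mpr hpv⟩

lemma nonLoops_addLoops (hA : ∀ p ∈ A, p.1 < p.2) :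
    nonLoops (addLoops n A) = A := by
  ext p
  rw [mem_nonLoops, mem_addLoops]
  constructor
  · rintro ⟨hpA | ⟨hloop, -⟩, hlt⟩
    exacts [hpA, absurd hloop hlt.ne]
  · exact fun hpA => ⟨.inl hpA, hA p hpA⟩

lemma IsBraidDiagram.addLoops_nonLoops (hB : IsBraidDiagram n B)
    (hiso : NoIsolatedVertex n B) : addLoops n (nonLoops B) = B := by
  obtain ⟨hrange, hfst, hsnd⟩ := hB
  ext p
  rw [mem_addLoops, mem_nonLoops, mem_isolatedVertices]
  constructor
  · rintro (⟨hpB, -⟩ | ⟨hloop, h1, hn, hfree⟩)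
    · exact hpB
    -- the element of `B` touching `p.1` is not an arc, so it is the loop `p`
    obtain ⟨q, hqB, hqv⟩ := hiso p.1 h1 hn
    have hq_loop : q.1 = q.2 := by
      by_contra hne
      have := hfree q (mem_nonLoops.mpr ⟨hqB, (hrange q hqB).2.1.lt_of_ne hne⟩)
      tauto
    convert hqB using 1
    exact Prod.ext (by omega) (by omega)
  · intro hpB
    rcases (hrange p hpB).2.1.lt_or_eq with hlt | hloop
    · exact .inl ⟨hpB, hlt⟩
    -- a loop shares its vertex with no other element of `B`
    refine .inr ⟨hloop, (hrange p hpB).1, hloop ▸ (hrange p hpB).2.2, fun q hq => ?_⟩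
    obtain ⟨hqB, hlt⟩ := mem_nonLoops.mp hq
    constructor
    · rintro hqp
      rw [hfst q hqB p hpB hqp] at hlt
      omega
    · rintro hqp
      rw [hsnd q hqB p hpB (hqp.trans hloop)] at hlt
      omega

end

/-- The map sending a braid diagram `B` to its set of non-loop elements
`{(i,j) ∈ B : i < j}` is a bijection from the `k`-noncrossing braid diagrams on `[n]`
without isolated vertices onto the enhanced `k`-noncrossing partition diagrams on `[n]`. -/
theorem braid_filter_bijOn_enhanced (k : ℕ) (n : ℕ) (hk : 3 ≤ k) :
    Set.BijOn (fun B : Finset (ℕ × ℕ) => B.filter (fun p => p.1 < p.2))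
      {B : Finset (ℕ × ℕ) | IsBraidDiagram n B ∧ ¬ HasEnhancedKCrossing k B ∧
        NoIsolatedVertex n B}
      {A : Finset (ℕ × ℕ) | IsPartitionDiagram n A ∧ ¬ HasEnhancedKCrossing k A} := by
  refine ⟨?mapsTo, ?injOn, ?surjOn⟩
  case mapsTo =>
    rintro B ⟨hB, hnc, -⟩
    exact ⟨hB.isPartitionDiagram_nonLoops, fun h => hnc (h.mono (filter_subset _ B))⟩
  case injOn =>
    rintro B₁ ⟨hB₁, -, hiso₁⟩ B₂ ⟨hB₂, -, hiso₂⟩ heq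
    calc B₁ = addLoops n (nonLoops B₁) := (hB₁.addLoops_nonLoops hiso₁).symm
      _ = addLoops n (nonLoops B₂) := congrArg (addLoops n) heq
      _ = B₂ := hB₂.addLoops_nonLoops hiso₂
  case surjOn =>
    rintro A ⟨hA, hnc⟩
    have hA_nonLoops : nonLoops (addLoops n A) = A :=
      nonLoops_addLoops fun p hp => (hA.1 p hp).2.1
    refine ⟨addLoops n A,
      ⟨hA.isBraidDiagram_addLoops, fun h => hnc ?_, noIsolatedVertex_addLoops⟩, hA_nonLoops⟩
    exact hA_nonLoops ▸ h.nonLoops (by omega)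
end

section
/- Fix an integer k ≥ 3 and an integer n ≥ 1. The number of 2-regular k-noncrossing partition diagrams on [n] equals the number of k-noncrossing braid diagrams on [n−1] having no isolated vertex. -/
def raise (C : Finset (ℕ × ℕ)) : Finset (ℕ × ℕ) :=
  C.image (fun p => (p.1, p.2 + 1))

lemma vartheta_raise (C : Finset (ℕ × ℕ)) : vartheta (raise C) = C := by
  simp [vartheta, raise, Finset.image_image, Function.comp_def]

lemma IsPartitionDiagram.raise_vartheta {n : ℕ} {A : Finset (ℕ × ℕ)}
    (hA : IsPartitionDiagram n A) : raise (vartheta A) = A := by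
  rw [raise, vartheta, Finset.image_image]
  conv_rhs => rw [← Finset.image_id (s := A)]
  refine Finset.image_congr fun p hp => ?_
  have := hA.1 p hp
  ext <;> simp only [Function.comp_apply, id_eq]; omega

lemma hasKCrossing_raise_iff {k : ℕ} {C : Finset (ℕ × ℕ)} :
    HasKCrossing k (raise C) ↔ HasEnhancedKCrossing k C := by
  constructor
  · rintro ⟨f, hf, h1, h2, h3⟩
    choose g hgC hgf using fun s => Finset.mem_image.1 (hf s)
    obtain rfl : f = fun s => ((g s).1, (g s).2 + 1) := funext fun s => (hgf s).symm
    exact ⟨g, hgC, h1, fun s t hst => by simpa using h2 hst, fun s t => Nat.le_of_lt_succ (h3 s t)⟩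
  · rintro ⟨g, hg, h1, h2, h3⟩
    exact ⟨fun s => ((g s).1, (g s).2 + 1), fun s => Finset.mem_image_of_mem _ (hg s), h1,
      fun s t hst => by simpa using h2 hst, fun s t => Nat.lt_succ_of_le (h3 s t)⟩

lemma isPartitionDiagram_raise_and_twoRegular_iff {n : ℕ} {C : Finset (ℕ × ℕ)} :
    IsPartitionDiagram n (raise C) ∧ TwoRegular (raise C) ↔ IsPartitionDiagram (n - 1) C := by
  simp only [IsPartitionDiagram, TwoRegular, raise, Finset.forall_mem_image]
  simp only [Finset.mem_image, Prod.ext_iff, not_exists, not_and, Nat.add_right_cancel_iff]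
  constructor
  · rintro ⟨⟨hb, hl, hr⟩, h2⟩
    refine ⟨fun p hp => ?_, hl, hr⟩
    have := hb hp
    have := h2 p.1 p hp rfl
    omega
  · rintro ⟨hb, hl, hr⟩
    refine ⟨⟨fun p hp => ?_, hl, hr⟩, fun i p hp hpi => ?_⟩
    · have := hb p hp
      omega
    · have := hb p hp
      omega

def twoRegularEquiv (k n : ℕ) :
    {A : Finset (ℕ × ℕ) // IsPartitionDiagram n A ∧ ¬ HasKCrossing k A ∧ TwoRegular A} ≃
    {C : Finset (ℕ × ℕ) // IsPartitionDiagram (n - 1) C ∧ ¬ HasEnhancedKCrossing k C} where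
  toFun A := ⟨vartheta A.1, by
    obtain ⟨A, hA, hk, h2⟩ := A
    rw [← hA.raise_vartheta] at hk h2 hA
    exact ⟨isPartitionDiagram_raise_and_twoRegular_iff.1 ⟨hA, h2⟩, hasKCrossing_raise_iff.not.1 hk⟩⟩
  invFun C := ⟨raise C.1, by
    obtain ⟨C, hC, hk⟩ := C
    obtain ⟨hA, h2⟩ := isPartitionDiagram_raise_and_twoRegular_iff.2 hC
    exact ⟨hA, hasKCrossing_raise_iff.not.2 hk, h2⟩⟩
  left_inv A := Subtype.ext A.2.1.raise_vartheta
  right_inv C := Subtype.ext <| vartheta_raise C.1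

def isolatedLoops (m : ℕ) (C : Finset (ℕ × ℕ)) : Finset (ℕ × ℕ) :=
  ((Finset.Icc 1 m).filter fun v => ∀ p ∈ C, p.1 ≠ v ∧ p.2 ≠ v).image fun v => (v, v)

lemma mem_isolatedLoops {m : ℕ} {C : Finset (ℕ × ℕ)} {p : ℕ × ℕ} :
    p ∈ isolatedLoops m C ↔
      p.1 = p.2 ∧ 1 ≤ p.1 ∧ p.1 ≤ m ∧ ∀ q ∈ C, q.1 ≠ p.1 ∧ q.2 ≠ p.1 := by
  obtain ⟨a, b⟩ := p
  simp only [isolatedLoops, Finset.mem_image, Finset.mem_filter, Finset.mem_Icc, Prod.mk.injEq]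
  grind

lemma IsPartitionDiagram.isBraidDiagram_s5 {m : ℕ} {C : Finset (ℕ × ℕ)}
    (hC : IsPartitionDiagram m C) : IsBraidDiagram m C :=
  ⟨fun p hp => by have := hC.1 p hp; omega, hC.2⟩

lemma IsBraidDiagram.isPartitionDiagram_filter_lt {m : ℕ} {B : Finset (ℕ × ℕ)}
    (hB : IsBraidDiagram m B) : IsPartitionDiagram m (B.filter fun p => p.1 < p.2) := by
  obtain ⟨hb, hl, hr⟩ := hB
  simp only [IsPartitionDiagram, Finset.mem_filter]
  grind

lemma IsBraidDiagram.union_isolatedLoops {m : ℕ} {C : Finset (ℕ × ℕ)} (hC : IsBraidDiagram m C) :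
    IsBraidDiagram m (C ∪ isolatedLoops m C) := by
  obtain ⟨hb, hl, hr⟩ := hC
  simp only [IsBraidDiagram, Finset.mem_union, mem_isolatedLoops]
  grind

lemma noIsolatedVertex_union_isolatedLoops (m : ℕ) (C : Finset (ℕ × ℕ)) :
    NoIsolatedVertex m (C ∪ isolatedLoops m C) := by
  intro v hv1 hv2
  by_cases hv : ∀ q ∈ C, q.1 ≠ v ∧ q.2 ≠ v
  · exact ⟨(v, v), Finset.mem_union_right _ (mem_isolatedLoops.2 ⟨rfl, hv1, hv2, hv⟩), .inl rfl⟩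
  · push Not at hv
    obtain ⟨q, hq, hqv⟩ := hv
    exact ⟨q, Finset.mem_union_left _ hq, by tauto⟩

lemma filter_lt_union_isolatedLoops {m : ℕ} {C : Finset (ℕ × ℕ)} (hC : ∀ p ∈ C, p.1 < p.2) :
    (C ∪ isolatedLoops m C).filter (fun p => p.1 < p.2) = C := by
  ext p
  simp only [Finset.mem_filter, Finset.mem_union, mem_isolatedLoops]
  grind

lemma IsBraidDiagram.filter_lt_union_isolatedLoops {m : ℕ} {B : Finset (ℕ × ℕ)}
    (hB : IsBraidDiagram m B) (hB' : NoIsolatedVertex m B) :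
    B.filter (fun p => p.1 < p.2) ∪ isolatedLoops m (B.filter fun p => p.1 < p.2) = B := by
  obtain ⟨hb, hl, hr⟩ := hB
  ext ⟨a, b⟩
  simp only [Finset.mem_filter, Finset.mem_union, mem_isolatedLoops]
  constructor
  · rintro (⟨h, -⟩ | ⟨rfl, ha1, ham, hiso⟩)
    · exact h
    · obtain ⟨q, hq, hqa⟩ := hB' a ha1 ham
      have := hb q hq
      grind
  · grind

lemma fst_lt_snd_of_enhancedCrossing {k : ℕ} (hk : 2 ≤ k) {f : Fin k → ℕ × ℕ}
    (h1 : StrictMono fun s => (f s).1) (h2 : StrictMono fun s => (f s).2)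
    (h3 : ∀ s t, (f s).1 ≤ (f t).2) (s : Fin k) : (f s).1 < (f s).2 := by
  have : Nontrivial (Fin k) := Fin.nontrivial_iff_two_le.2 hk
  obtain ⟨t, hts⟩ := exists_ne s
  rcases hts.lt_or_gt with hts | hst
  · exact (h3 s t).trans_lt (h2 hts)
  · exact (h1 hst).trans_le (h3 t s)

lemma hasEnhancedKCrossing_filter_lt_iff {k : ℕ} (hk : 2 ≤ k) {B : Finset (ℕ × ℕ)} :
    HasEnhancedKCrossing k (B.filter fun p => p.1 < p.2) ↔ HasEnhancedKCrossing k B := by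
  constructor
  · rintro ⟨f, hf, h⟩
    exact ⟨f, fun s => (Finset.mem_filter.1 (hf s)).1, h⟩
  · rintro ⟨f, hf, h1, h2, h3⟩
    exact ⟨f, fun s => Finset.mem_filter.2 ⟨hf s, fst_lt_snd_of_enhancedCrossing hk h1 h2 h3 s⟩,
      h1, h2, h3⟩

def braidEquiv {k : ℕ} (hk : 2 ≤ k) (m : ℕ) :
    {C : Finset (ℕ × ℕ) // IsPartitionDiagram m C ∧ ¬ HasEnhancedKCrossing k C} ≃
    {B : Finset (ℕ × ℕ) //
      IsBraidDiagram m B ∧ ¬ HasEnhancedKCrossing k B ∧ NoIsolatedVertex m B} where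
  toFun C := ⟨C.1 ∪ isolatedLoops m C.1, C.2.1.isBraidDiagram_s5.union_isolatedLoops, by
    rw [← hasEnhancedKCrossing_filter_lt_iff hk,
      filter_lt_union_isolatedLoops fun p hp => (C.2.1.1 p hp).2.1]
    exact C.2.2, noIsolatedVertex_union_isolatedLoops m C.1⟩
  invFun B := ⟨B.1.filter fun p => p.1 < p.2, B.2.1.isPartitionDiagram_filter_lt,
    (hasEnhancedKCrossing_filter_lt_iff hk).not.2 B.2.2.1⟩
  left_inv C := Subtype.ext <| filter_lt_union_isolatedLoops fun p hp => (C.2.1.1 p hp).2.1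
  right_inv B := Subtype.ext <| B.2.1.filter_lt_union_isolatedLoops B.2.2.2

theorem card_twoRegular_eq_card_braids_general (k n : ℕ) (hk : 3 ≤ k) :
    Nat.card {A : Finset (ℕ × ℕ) //
        IsPartitionDiagram n A ∧ ¬ HasKCrossing k A ∧ TwoRegular A} =
    Nat.card {B : Finset (ℕ × ℕ) //
        IsBraidDiagram (n - 1) B ∧ ¬ HasEnhancedKCrossing k B ∧
        NoIsolatedVertex (n - 1) B} :=
  Nat.card_congr ((twoRegularEquiv k n).trans (braidEquiv (by omega) (n - 1)))

/-- The number of 2-regular `k`-noncrossing partition diagrams on `[n]` equals the number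
of `k`-noncrossing braid diagrams on `[n-1]` without isolated vertices. -/
theorem card_twoRegular_eq_card_braids (k n : ℕ) (hk : 3 ≤ k) (hn : 1 ≤ n) :
    Nat.card {A : Finset (ℕ × ℕ) //
        IsPartitionDiagram n A ∧ ¬ HasKCrossing k A ∧ TwoRegular A} =
    Nat.card {B : Finset (ℕ × ℕ) //
        IsBraidDiagram (n - 1) B ∧ ¬ HasEnhancedKCrossing k B ∧
        NoIsolatedVertex (n - 1) B} :=
  card_twoRegular_eq_card_braids_general k n hk
end

section
/- Fix an integer k ≥ 3 and an integer n ≥ 1. The number of vacillating tableaux of length 2n all of whose shapes have fewer than k rows equals the number of hesitating tableaux of length 2(n−1) all of whose shapes have fewer than k rows. -/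
/-- `ν` is obtained from `μ` by adding exactly one cell. -/
def AddOneCell (μ ν : YoungDiagram) : Prop :=
  ∃ c : ℕ × ℕ, c ∉ μ.cells ∧ ν.cells = insert c μ.cells

/-- `ν` is obtained from `μ` by removing exactly one cell. -/
def RemoveOneCell (μ ν : YoungDiagram) : Prop := AddOneCell ν μ

/-- A vacillating tableau of length `2n`: a sequence `λ⁰,…,λ^{2n}` of Young diagrams
with `λ⁰ = λ^{2n} = ∅`, where each odd step does nothing or removes one cell and each
even step does nothing or adds one cell. -/
def IsVacillatingTableau (n : ℕ) (f : Fin (2 * n + 1) → YoungDiagram) : Prop :=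
  f ⟨0, by omega⟩ = ⊥ ∧ f ⟨2 * n, by omega⟩ = ⊥ ∧
  ∀ i : Fin n,
    (f ⟨2 * i.val + 1, by have := i.isLt; omega⟩ = f ⟨2 * i.val, by have := i.isLt; omega⟩ ∨
      RemoveOneCell (f ⟨2 * i.val, by have := i.isLt; omega⟩)
        (f ⟨2 * i.val + 1, by have := i.isLt; omega⟩)) ∧
    (f ⟨2 * i.val + 2, by have := i.isLt; omega⟩ = f ⟨2 * i.val + 1, by have := i.isLt; omega⟩ ∨
      AddOneCell (f ⟨2 * i.val + 1, by have := i.isLt; omega⟩)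
        (f ⟨2 * i.val + 2, by have := i.isLt; omega⟩))

/-- A hesitating tableau of length `2n`: a sequence `λ⁰,…,λ^{2n}` of Young diagrams with
`λ⁰ = λ^{2n} = ∅`, where each pair of consecutive steps is one of: (do nothing, do nothing),
(remove one cell, do nothing), (do nothing, add one cell), (add one cell, remove one cell). -/
def IsHesitatingTableau (n : ℕ) (f : Fin (2 * n + 1) → YoungDiagram) : Prop :=
  f ⟨0, by omega⟩ = ⊥ ∧ f ⟨2 * n, by omega⟩ = ⊥ ∧
  ∀ i : Fin n,
    (f ⟨2 * i.val + 1, by have := i.isLt; omega⟩ = f ⟨2 * i.val, by have := i.isLt; omega⟩ ∧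
      f ⟨2 * i.val + 2, by have := i.isLt; omega⟩ = f ⟨2 * i.val + 1, by have := i.isLt; omega⟩) ∨
    (RemoveOneCell (f ⟨2 * i.val, by have := i.isLt; omega⟩)
        (f ⟨2 * i.val + 1, by have := i.isLt; omega⟩) ∧
      f ⟨2 * i.val + 2, by have := i.isLt; omega⟩ = f ⟨2 * i.val + 1, by have := i.isLt; omega⟩) ∨
    (f ⟨2 * i.val + 1, by have := i.isLt; omega⟩ = f ⟨2 * i.val, by have := i.isLt; omega⟩ ∧
      AddOneCell (f ⟨2 * i.val + 1, by have := i.isLt; omega⟩)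
        (f ⟨2 * i.val + 2, by have := i.isLt; omega⟩)) ∨
    (AddOneCell (f ⟨2 * i.val, by have := i.isLt; omega⟩)
        (f ⟨2 * i.val + 1, by have := i.isLt; omega⟩) ∧
      RemoveOneCell (f ⟨2 * i.val + 1, by have := i.isLt; omega⟩)
        (f ⟨2 * i.val + 2, by have := i.isLt; omega⟩))

/-- Every shape in the tableau has fewer than `k` rows. -/
def FewerThanKRows (k : ℕ) {m : ℕ} (f : Fin m → YoungDiagram) : Prop :=
  ∀ j : Fin m, (f j).colLen 0 < k

/-!
The first and last steps of a vacillating tableau `λ⁰, …, λ^{2n}` are forced to be trivial, so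
dropping `λ⁰` leaves a sequence of length `2(n-1)` made of blocks `λ^{2i-1} → λ^{2i} → λ^{2i+1}`
of the form (add or stay, remove or stay). Exchanging the order of the two steps of every block
while keeping its outer shapes turns (stay, remove) into (remove, stay) and (add, stay) into
(stay, add), and keeps (stay, stay) and (add, remove): the result is exactly a hesitating tableau.
The exchange is an involution, and every shape it produces already occurs in its input, so the
bound on the number of rows is preserved in both directions.
-/

open Classical in
/-- The middle shape after exchanging the order of the steps `a → b → c`. -/
noncomputable def swapMid {α : Type*} (a b c : α) : α :=
  if b = a then c else if b = c then a else b

section SwapMid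

variable {α : Type*}

@[simp]
lemma swapMid_self_left (a c : α) : swapMid a a c = c := if_pos rfl

lemma swapMid_self_right {a b : α} (h : b ≠ a) : swapMid a b b = a := by
  rw [swapMid, if_neg h, if_pos rfl]

lemma swapMid_of_ne {a b c : α} (ha : b ≠ a) (hc : b ≠ c) : swapMid a b c = b := by
  rw [swapMid, if_neg ha, if_neg hc]

lemma swapMid_swapMid (a b c : α) : swapMid a (swapMid a b c) c = b := by
  by_cases ha : b = a
  · subst ha
    by_cases hc : c = b
    · subst hc; simp
    · rw [swapMid_self_left, swapMid_self_right hc]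
  · by_cases hc : b = c
    · subst hc; rw [swapMid_self_right ha, swapMid_self_left]
    · rw [swapMid_of_ne ha hc, swapMid_of_ne ha hc]

lemma swapMid_eq_or (a b c : α) : swapMid a b c = a ∨ swapMid a b c = b ∨ swapMid a b c = c := by
  unfold swapMid; split_ifs <;> simp

end SwapMid

section StepSequences

variable {α : Type*} [Bot α]

def IsStepTableau (P : α → α → α → Prop) (n : ℕ) (f : Fin (2 * n + 1) → α) : Prop :=
  f ⟨0, by omega⟩ = ⊥ ∧ f ⟨2 * n, by omega⟩ = ⊥ ∧
  ∀ i : Fin n, P (f ⟨2 * i.val, by omega⟩) (f ⟨2 * i.val + 1, by omega⟩)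
    (f ⟨2 * i.val + 2, by omega⟩)

structure IsStepSeq (P : α → α → α → Prop) (N : ℕ) (s : ℕ → α) : Prop where
  zero : s 0 = ⊥
  step (i : ℕ) : P (s (2 * i)) (s (2 * i + 1)) (s (2 * i + 2))
  eq_bot {m : ℕ} : N ≤ m → s m = ⊥

def padBot {N : ℕ} (f : Fin N → α) (m : ℕ) : α :=
  if h : m < N then f ⟨m, h⟩ else ⊥

lemma padBot_of_lt {N m : ℕ} (f : Fin N → α) (h : m < N) : padBot f m = f ⟨m, h⟩ := dif_pos h

variable {P : α → α → α → Prop} {n : ℕ}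

lemma IsStepTableau.isStepSeq_padBot (hP : P ⊥ ⊥ ⊥) {f : Fin (2 * n + 1) → α}
    (hf : IsStepTableau P n f) : IsStepSeq P (2 * n) (padBot f) := by
  obtain ⟨h0, hn, hstep⟩ := hf
  have eq_bot {m : ℕ} (hm : 2 * n ≤ m) : padBot f m = ⊥ := by
    unfold padBot
    split_ifs with h
    · obtain rfl : m = 2 * n := by omega
      exact hn
    · rfl
  refine ⟨(padBot_of_lt f (by omega)).trans h0, fun i => ?_, eq_bot⟩
  by_cases hi : i < n
  · rw [padBot_of_lt f (by omega), padBot_of_lt f (by omega), padBot_of_lt f (by omega)]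
    exact hstep ⟨i, hi⟩
  · rwa [eq_bot (by omega), eq_bot (by omega), eq_bot (by omega)]

lemma IsStepSeq.isStepTableau_restrict {s : ℕ → α} (hs : IsStepSeq P (2 * n) s) :
    IsStepTableau P n (fun j => s j) :=
  ⟨hs.zero, hs.eq_bot le_rfl, fun i => hs.step i⟩

def finStepTableauEquiv (P : α → α → α → Prop) (hP : P ⊥ ⊥ ⊥) (Q : α → Prop) (n : ℕ) :
    {f : Fin (2 * n + 1) → α // IsStepTableau P n f ∧ ∀ j, Q (f j)} ≃
      {s : ℕ → α // IsStepSeq P (2 * n) s ∧ ∀ m, Q (s m)} where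
  toFun f := ⟨padBot f.1, f.2.1.isStepSeq_padBot hP, fun m => by
    unfold padBot
    split_ifs
    · exact f.2.2 _
    · exact f.2.1.1 ▸ f.2.2 _⟩
  invFun s := ⟨fun j => s.1 j, s.2.1.isStepTableau_restrict, fun j => s.2.2 j⟩
  left_inv f := Subtype.ext <| funext fun j => dif_pos j.2
  right_inv s := Subtype.ext <| funext fun m => by
    change padBot _ m = _
    unfold padBot
    split_ifs with h
    · rfl
    · exact (s.2.1.eq_bot (by omega)).symm

end StepSequences

lemma AddOneCell.ne {μ ν : YoungDiagram} (h : AddOneCell μ ν) : μ ≠ ν := by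
  obtain ⟨c, hc, hν⟩ := h
  rintro rfl
  exact hc (hν ▸ Finset.mem_insert_self c _)

lemma RemoveOneCell.ne {μ ν : YoungDiagram} (h : RemoveOneCell μ ν) : μ ≠ ν :=
  (AddOneCell.ne h).symm

lemma not_addOneCell_bot (μ : YoungDiagram) : ¬AddOneCell μ ⊥ := by
  rintro ⟨c, -, h⟩
  exact Finset.insert_ne_empty c μ.cells (h.symm.trans YoungDiagram.cells_bot)

lemma not_removeOneCell_bot (ν : YoungDiagram) : ¬RemoveOneCell ⊥ ν :=
  not_addOneCell_bot ν

section Steps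

variable {a b c : YoungDiagram}

def IsVacillatingStep (a b c : YoungDiagram) : Prop :=
  (b = a ∨ RemoveOneCell a b) ∧ (c = b ∨ AddOneCell b c)

/-- The blocks of a vacillating tableau read from an odd position. -/
def IsShiftedVacillatingStep (a b c : YoungDiagram) : Prop :=
  (b = a ∨ AddOneCell a b) ∧ (c = b ∨ RemoveOneCell b c)

def IsHesitatingStep (a b c : YoungDiagram) : Prop :=
  (b = a ∧ c = b) ∨ (RemoveOneCell a b ∧ c = b) ∨ (b = a ∧ AddOneCell b c) ∨
    (AddOneCell a b ∧ RemoveOneCell b c)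

lemma IsShiftedVacillatingStep.isHesitatingStep_swapMid (h : IsShiftedVacillatingStep a b c) :
    IsHesitatingStep a (swapMid a b c) c := by
  obtain ⟨rfl | hab, rfl | hbc⟩ := h
  · rw [swapMid_self_left]
    exact .inl ⟨rfl, rfl⟩
  · rw [swapMid_self_left]
    exact .inr <| .inl ⟨hbc, rfl⟩
  · rw [swapMid_self_right hab.ne.symm]
    exact .inr <| .inr <| .inl ⟨rfl, hab⟩
  · rw [swapMid_of_ne hab.ne.symm hbc.ne]
    exact .inr <| .inr <| .inr ⟨hab, hbc⟩

lemma IsHesitatingStep.isShiftedVacillatingStep_swapMid (h : IsHesitatingStep a b c) :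
    IsShiftedVacillatingStep a (swapMid a b c) c := by
  obtain ⟨rfl, rfl⟩ | ⟨hab, rfl⟩ | ⟨rfl, hbc⟩ | ⟨hab, hbc⟩ := h
  · simp only [swapMid_self_left]
    exact ⟨.inl rfl, .inl rfl⟩
  · rw [swapMid_self_right hab.ne.symm]
    exact ⟨.inl rfl, .inr hab⟩
  · rw [swapMid_self_left]
    exact ⟨.inr hbc, .inl rfl⟩
  · rw [swapMid_of_ne hab.ne.symm hbc.ne]
    exact ⟨.inr hab, .inr hbc⟩

lemma isHesitatingStep_swapMid_iff :
    IsHesitatingStep a (swapMid a b c) c ↔ IsShiftedVacillatingStep a b c :=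
  ⟨fun h => swapMid_swapMid a b c ▸ h.isShiftedVacillatingStep_swapMid,
    IsShiftedVacillatingStep.isHesitatingStep_swapMid⟩

end Steps

section SwapMids

variable {α : Type*}

noncomputable def swapMids (t : ℕ → α) (m : ℕ) : α :=
  if m % 2 = 0 then t m else swapMid (t (m - 1)) (t m) (t (m + 1))

lemma swapMids_of_even (t : ℕ → α) {m : ℕ} (h : m % 2 = 0) : swapMids t m = t m := if_pos h

lemma swapMids_two_mul_add_one (t : ℕ → α) (i : ℕ) :
    swapMids t (2 * i + 1) = swapMid (t (2 * i)) (t (2 * i + 1)) (t (2 * i + 2)) :=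
  if_neg (by omega)

lemma swapMids_involutive : Function.Involutive (swapMids (α := α)) := by
  intro t
  funext m
  unfold swapMids
  split_ifs <;> first | rfl | omega | exact swapMid_swapMid _ _ _

lemma exists_swapMids_eq (t : ℕ → α) (m : ℕ) : ∃ j, swapMids t m = t j := by
  unfold swapMids
  split_ifs
  · exact ⟨m, rfl⟩
  · rcases swapMid_eq_or (t (m - 1)) (t m) (t (m + 1)) with h | h | h <;> exact ⟨_, h⟩

lemma forall_swapMids_iff (Q : α → Prop) (t : ℕ → α) :
    (∀ m, Q (swapMids t m)) ↔ ∀ m, Q (t m) := by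
  have swapMids_of_forall (t : ℕ → α) (ht : ∀ m, Q (t m)) (m : ℕ) : Q (swapMids t m) := by
    obtain ⟨j, hj⟩ := exists_swapMids_eq t m
    exact hj ▸ ht j
  refine ⟨fun h m => ?_, swapMids_of_forall t⟩
  rw [← swapMids_involutive t]
  exact swapMids_of_forall _ h m

lemma swapMids_eq_bot [Bot α] {t : ℕ → α} {p m : ℕ} (ht : ∀ j, 2 * p ≤ j → t j = ⊥)
    (hm : 2 * p ≤ m) : swapMids t m = ⊥ := by
  unfold swapMids
  split_ifs
  · exact ht m hm
  · rw [ht (m - 1) (by omega), ht m hm, ht (m + 1) (by omega), swapMid_self_left]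

end SwapMids

lemma isStepSeq_hesitating_swapMids_iff {p : ℕ} (t : ℕ → YoungDiagram) :
    IsStepSeq IsHesitatingStep (2 * p) (swapMids t) ↔
      IsStepSeq IsShiftedVacillatingStep (2 * p) t := by
  have step_iff (i : ℕ) :
      IsHesitatingStep (swapMids t (2 * i)) (swapMids t (2 * i + 1)) (swapMids t (2 * i + 2)) ↔
        IsShiftedVacillatingStep (t (2 * i)) (t (2 * i + 1)) (t (2 * i + 2)) := by
    rw [swapMids_two_mul_add_one, swapMids_of_even t (m := 2 * i) (by omega),
      swapMids_of_even t (m := 2 * i + 2) (by omega), isHesitatingStep_swapMid_iff]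
  refine ⟨fun h => ⟨?_, fun i => (step_iff i).1 (h.step i), ?_⟩,
    fun h => ⟨?_, fun i => (step_iff i).2 (h.step i), swapMids_eq_bot fun _ => h.eq_bot⟩⟩
  · exact swapMids_of_even t (m := 0) rfl ▸ h.zero
  · intro m hm
    rw [← swapMids_involutive t]
    exact swapMids_eq_bot (fun _ => h.eq_bot) hm
  · exact (swapMids_of_even t (m := 0) rfl).trans h.zero

noncomputable def swapMidsEquiv (Q : YoungDiagram → Prop) (p : ℕ) :
    {t : ℕ → YoungDiagram // IsStepSeq IsShiftedVacillatingStep (2 * p) t ∧ ∀ m, Q (t m)} ≃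
      {g : ℕ → YoungDiagram // IsStepSeq IsHesitatingStep (2 * p) g ∧ ∀ m, Q (g m)} :=
  (swapMids_involutive.toPerm _).subtypeEquiv fun t =>
    and_congr (isStepSeq_hesitating_swapMids_iff t).symm (forall_swapMids_iff Q t).symm

def botCons {α : Type*} [Bot α] (t : ℕ → α) : ℕ → α
  | 0 => ⊥
  | m + 1 => t m

section Shift

variable {p : ℕ}

lemma IsStepSeq.isStepSeq_shifted {s : ℕ → YoungDiagram}
    (hs : IsStepSeq IsVacillatingStep (2 * (p + 1)) s) :
    IsStepSeq IsShiftedVacillatingStep (2 * p) (fun m => s (m + 1)) where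
  zero := by
    rcases (hs.step 0).1 with h | h
    · exact h.trans hs.zero
    · exact absurd (hs.zero ▸ h) (not_removeOneCell_bot _)
  step i := ⟨(hs.step i).2, (hs.step (i + 1)).1⟩
  eq_bot {m} hm := by
    rcases hm.eq_or_lt with rfl | hm
    · have hlast : s (2 * p + 2) = ⊥ := hs.eq_bot le_rfl
      rcases (hs.step p).2 with h | h
      · exact h.symm.trans hlast
      · exact absurd (hlast ▸ h) (not_addOneCell_bot _)
    · exact hs.eq_bot (by omega)

lemma IsStepSeq.isStepSeq_botCons {t : ℕ → YoungDiagram}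
    (ht : IsStepSeq IsShiftedVacillatingStep (2 * p) t) :
    IsStepSeq IsVacillatingStep (2 * (p + 1)) (botCons t) where
  zero := rfl
  step
    | 0 => ⟨.inl ht.zero, (ht.step 0).1⟩
    | i + 1 => ⟨(ht.step i).2, (ht.step (i + 1)).1⟩
  eq_bot {m} hm := by
    obtain ⟨m, rfl⟩ : ∃ m', m = m' + 1 := ⟨m - 1, by omega⟩
    exact ht.eq_bot (by omega)

end Shift

def shiftEquiv (Q : YoungDiagram → Prop) (p : ℕ) :
    {s : ℕ → YoungDiagram // IsStepSeq IsVacillatingStep (2 * (p + 1)) s ∧ ∀ m, Q (s m)} ≃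
      {t : ℕ → YoungDiagram // IsStepSeq IsShiftedVacillatingStep (2 * p) t ∧ ∀ m, Q (t m)} where
  toFun s := ⟨fun m => s.1 (m + 1), s.2.1.isStepSeq_shifted, fun m => s.2.2 (m + 1)⟩
  invFun t := ⟨botCons t.1, t.2.1.isStepSeq_botCons, fun
    | 0 => show Q ⊥ from t.2.1.zero ▸ t.2.2 0
    | m + 1 => t.2.2 m⟩
  left_inv s := Subtype.ext <| funext fun
    | 0 => s.2.1.zero.symm
    | _ + 1 => rfl
  right_inv _ := rfl

theorem card_vacillating_eq_card_hesitating_general (k n : ℕ) (hn : 1 ≤ n) :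
    Nat.card {f : Fin (2 * n + 1) → YoungDiagram //
        IsVacillatingTableau n f ∧ FewerThanKRows k f} =
    Nat.card {g : Fin (2 * (n - 1) + 1) → YoungDiagram //
        IsHesitatingTableau (n - 1) g ∧ FewerThanKRows k g} := by
  obtain ⟨p, rfl⟩ : ∃ p, n = p + 1 := ⟨n - 1, by omega⟩
  let Q (μ : YoungDiagram) : Prop := μ.colLen 0 < k
  -- `IsVacillatingTableau` and `IsHesitatingTableau` unfold to `IsStepTableau` of the steps.
  exact Nat.card_congr <|
    (finStepTableauEquiv IsVacillatingStep ⟨.inl rfl, .inl rfl⟩ Q (p + 1)).trans <|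
      (shiftEquiv Q p).trans <| (swapMidsEquiv Q p).trans <|
        (finStepTableauEquiv IsHesitatingStep (.inl ⟨rfl, rfl⟩) Q p).symm

/-- The number of vacillating tableaux of length `2n` with fewer than `k` rows equals the
number of hesitating tableaux of length `2(n-1)` with fewer than `k` rows. -/
theorem card_vacillating_eq_card_hesitating (k n : ℕ) (hk : 3 ≤ k) (hn : 1 ≤ n) :
    Nat.card {f : Fin (2 * n + 1) → YoungDiagram //
        IsVacillatingTableau n f ∧ FewerThanKRows k f} =
    Nat.card {g : Fin (2 * (n - 1) + 1) → YoungDiagram //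
        IsHesitatingTableau (n - 1) g ∧ FewerThanKRows k g} :=
  card_vacillating_eq_card_hesitating_general k n hn
end

section
/- Let R = ℚ[x, x⁻¹] be the ring of Laurent polynomials over ℚ and let Y ∈ R[[u]] be the unique formal power series with constant term 0 satisfying Y = u·(1 + x⁻¹)·(x + Y)·(1 + Y). Then for all integers k ≥ 1, n ≥ 0 and m ∈ ℤ, the coefficient of x^m in the coefficient of u^{n+1} of Y^k equals (k/(n+1)) · Σ_{s=0}^{n+1} C(n+1,s)·C(n+1,k+s)·C(n+1,s+m), where C(a,b) denotes the binomial coefficient with the convention C(a,b) = 0 unless 0 ≤ b ≤ a. -/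
/-!
With `φ(y) = (1 + x⁻¹)(x + y)(1 + y)` the equation reads `Y = u φ(Y)`, so Lagrange inversion gives
`(n + 1) [u^{n+1}] Y^k = k [y^k] Q^{n+1}` for `Q(y) = y φ(y⁻¹) = (1 + x)(1 + y)(1 + x⁻¹y⁻¹)`;
expanding the three binomials in `Q^{n+1}` yields the triple sum.

Lagrange inversion for a polynomial `φ` is proved by induction on `n`, showing
`[u^{n+1}] Y^k = [y^k] (Q^n θQ)` with `θ = y d/dy`: the functional equation gives
`[u^{n+1}] Y^{j+1} = Σ_i φ_i [u^n] Y^{j+i}`, which is exactly how multiplication by `Q` acts on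
`y`-coefficients, while `(n + 1) Q^n θQ = θ(Q^{n+1})` has `y^k`-coefficient `k [y^k] Q^{n+1}`,
in particular a vanishing constant coefficient, matching `[u^{n+1}] Y^0 = 0`.
-/

open PowerSeries LaurentPolynomial

/-- Binomial coefficient `C(a,b)` for integers, with the convention that it vanishes
unless `0 ≤ b ≤ a`. -/
def intChoose (a b : ℤ) : ℕ :=
  if 0 ≤ b ∧ b ≤ a then a.toNat.choose b.toNat else 0

open scoped Polynomial

lemma intChoose_natCast (N a : ℕ) : intChoose N a = N.choose a := by
  unfold intChoose
  split_ifs with h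
  · simp
  · rw [Nat.choose_eq_zero_of_lt (by omega)]

namespace LaurentPolynomial

variable {R : Type*} [CommRing R]

lemma coeff_C_mul_T_mul (a : R) (n k : ℤ) (f : R[T;T⁻¹]) :
    (C a * T n * f).coeff k = a * f.coeff (k - n) := by
  rw [← single_eq_C_mul_T, AddMonoidAlgebra.coeff_single_mul_apply, neg_add_eq_sub]

noncomputable def eulerOp : R[T;T⁻¹] →ₗ[R] R[T;T⁻¹] where
  toFun f := .ofCoeff <| Finsupp.onFinset f.coeff.support (fun k => k • f.coeff k)
    fun k hk => Finsupp.mem_support_iff.2 fun h => hk (by rw [h, smul_zero])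
  map_add' f g := by ext k; simp [smul_add]
  map_smul' r f := by ext k; simp [mul_left_comm]

lemma coeff_eulerOp (f : R[T;T⁻¹]) (k : ℤ) : (eulerOp f).coeff k = k • f.coeff k := rfl

lemma eulerOp_single (n : ℤ) (a : R) :
    eulerOp (AddMonoidAlgebra.single n a) = n • AddMonoidAlgebra.single n a := by
  ext k
  rw [coeff_eulerOp, AddMonoidAlgebra.coeff_smul_apply, AddMonoidAlgebra.coeff_single,
    Finsupp.single_apply]
  split_ifs with h <;> simp [h]

lemma eulerOp_mul (f g : R[T;T⁻¹]) : eulerOp (f * g) = f • eulerOp g + g • eulerOp f := by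
  induction f using AddMonoidAlgebra.induction_linear with
  | zero => simp
  | add f₁ f₂ h₁ h₂ => rw [add_mul, map_add, h₁, h₂, map_add, add_smul, smul_add]; abel
  | single i a =>
    induction g using AddMonoidAlgebra.induction_linear with
    | zero => simp
    | add g₁ g₂ h₁ h₂ => rw [mul_add, map_add, h₁, h₂, map_add, add_smul, smul_add]; abel
    | single j b =>
      rw [AddMonoidAlgebra.single_mul_single, eulerOp_single, eulerOp_single, eulerOp_single,
        smul_eq_mul, smul_eq_mul, mul_smul_comm, mul_smul_comm, AddMonoidAlgebra.single_mul_single,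
        AddMonoidAlgebra.single_mul_single, mul_comm b, add_comm j, ← add_smul, add_comm j]

noncomputable def eulerDeriv : Derivation R R[T;T⁻¹] R[T;T⁻¹] := Derivation.mk' eulerOp eulerOp_mul

lemma coeff_eulerDeriv (f : R[T;T⁻¹]) (k : ℤ) : (eulerDeriv f).coeff k = k • f.coeff k := rfl

lemma nsmul_pow_mul_eulerDeriv (f : R[T;T⁻¹]) (n : ℕ) :
    (n + 1) • (f ^ n * eulerDeriv f) = eulerDeriv (f ^ (n + 1)) := by
  rw [Derivation.leibniz_pow, Nat.add_sub_cancel, smul_eq_mul]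

lemma coeff_zero_pow_mul_eulerDeriv [IsAddTorsionFree R] (f : R[T;T⁻¹]) (n : ℕ) :
    (f ^ n * eulerDeriv f).coeff 0 = 0 := by
  refine (nsmul_right_inj n.succ_ne_zero).1 ?_
  rw [smul_zero, ← AddMonoidAlgebra.coeff_smul_apply, nsmul_pow_mul_eulerDeriv, coeff_eulerDeriv,
    zero_smul]

lemma coeff_one_add_T_pow (N : ℕ) (j : ℤ) :
    ((1 + T 1 : R[T;T⁻¹]) ^ N).coeff j = intChoose N j := by
  rw [← Polynomial.toLaurent_X, ← map_one Polynomial.toLaurent, ← map_add, ← map_pow,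
    coeff_toLaurent]
  rcases j with a | a
  · rw [Int.ofNat_eq_natCast, ← Nat.castEmbedding_apply,
      Finsupp.mapDomain_apply Nat.castEmbedding.injective, Nat.castEmbedding_apply, intChoose_natCast]
    exact Polynomial.coeff_one_add_X_pow R N a
  · rw [Finsupp.mapDomain_of_notMem_range _ _ (by simp), intChoose, if_neg (by omega), Nat.cast_zero]

variable (R) in
/-- `(1 + x)(1 + y)(1 + x⁻¹y⁻¹)`, with `x` the inner and `y` the outer variable. -/
noncomputable def xyKernel : R[T;T⁻¹][T;T⁻¹] :=
  C (1 + T 1) * (1 + T 1) * (1 + C (T (-1)) * T (-1))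

lemma coeff_coeff_xyKernel_pow (N : ℕ) (k m : ℤ) :
    ((xyKernel R ^ N).coeff k).coeff m =
      ∑ s ∈ Finset.range (N + 1), (intChoose N s * intChoose N (k + s) * intChoose N (s + m) : R) := by
  have h_inv : (1 + C (T (-1)) * T (-1) : R[T;T⁻¹][T;T⁻¹]) ^ N =
      ∑ s ∈ Finset.range (N + 1), C ((N.choose s : R[T;T⁻¹]) * T (-s)) * T (-s) := by
    rw [add_comm, add_pow]
    refine Finset.sum_congr rfl fun s _ => ?_
    rw [one_pow, mul_one, mul_pow, ← map_pow, T_pow, T_pow, map_mul, map_natCast, mul_neg_one]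
    ring
  have h_pow : xyKernel R ^ N = ∑ s ∈ Finset.range (N + 1),
      C ((1 + T 1) ^ N * (N.choose s : R[T;T⁻¹]) * T (-s)) * T (-s) * (1 + T 1) ^ N := by
    rw [xyKernel, mul_pow, mul_pow, h_inv, Finset.mul_sum]
    refine Finset.sum_congr rfl fun s _ => ?_
    simp only [map_mul, map_pow]
    ring
  rw [h_pow, AddMonoidAlgebra.coeff_sum, Finsupp.finsetSum_apply, AddMonoidAlgebra.coeff_sum,
    Finsupp.finsetSum_apply]
  refine Finset.sum_congr rfl fun s _ => ?_
  rw [coeff_C_mul_T_mul, coeff_one_add_T_pow, sub_neg_eq_add,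
    show (1 + T 1) ^ N * (N.choose s : R[T;T⁻¹]) * T (-s) * (intChoose N (k + s) : R[T;T⁻¹]) =
      C ((N.choose s : R) * intChoose N (k + s)) * T (-s) * (1 + T 1) ^ N by
        simp only [map_mul, map_natCast]; ring,
    coeff_C_mul_T_mul, coeff_one_add_T_pow, sub_neg_eq_add, intChoose_natCast, add_comm m]

end LaurentPolynomial

variable {S : Type*} [CommRing S]

namespace Polynomial

noncomputable def laurentKernel (φ : S[X]) : S[T;T⁻¹] := T 1 * invert (toLaurent φ)

lemma coeff_laurentKernel_of_one_lt (φ : S[X]) {k : ℤ} (hk : 1 < k) :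
    φ.laurentKernel.coeff k = 0 := by
  rw [laurentKernel, T, AddMonoidAlgebra.coeff_single_mul_apply, invert_apply, one_mul,
    ← Finsupp.notMem_support_iff, support_coeff_toLaurent, Finset.mem_map]
  rintro ⟨i, -, hi⟩
  simp only [Nat.castEmbedding_apply] at hi
  omega

lemma coeff_laurentKernel_mul (φ : S[X]) (H : S[T;T⁻¹]) (k : ℤ) :
    (φ.laurentKernel * H).coeff k = φ.sum fun i a => a * H.coeff (k - 1 + i) := by
  induction φ using Polynomial.induction_on' with
  | add p q hp hq =>
    rw [sum_add_index _ _ _ (fun _ => zero_mul _) (fun _ _ _ => add_mul _ _ _), ← hp, ← hq,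
      laurentKernel, laurentKernel, laurentKernel, map_add, map_add, mul_add, add_mul]
    rfl
  | monomial i a =>
    rw [sum_monomial_index (f := fun i a => a * H.coeff (k - 1 + i)) _ (zero_mul _),
      laurentKernel, toLaurent_C_mul_T, map_mul, invert_C, invert_T,
      show T 1 * (LaurentPolynomial.C a * T (-i)) = LaurentPolynomial.C a * T (1 - i) by
        rw [sub_eq_add_neg, T_add]; ring,
      coeff_C_mul_T_mul, sub_sub_eq_add_sub, add_sub_right_comm]

end Polynomial

section LagrangeInversion

variable {φ : S[X]} {Y : S⟦X⟧} (hY : Y = PowerSeries.X * φ.eval₂ PowerSeries.C Y)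
include hY

lemma PowerSeries.coeff_succ_pow_succ_of_eq_X_mul_eval₂ (n k : ℕ) :
    coeff (n + 1) (Y ^ (k + 1)) = φ.sum fun i a => a * coeff n (Y ^ (k + i)) := by
  rw [pow_succ, mul_comm]
  nth_rw 1 [hY]
  rw [Polynomial.eval₂_eq_sum, mul_assoc, coeff_succ_X_mul, Polynomial.sum_def, Finset.sum_mul,
    map_sum]
  refine Finset.sum_congr rfl fun i _ => ?_
  rw [mul_assoc, coeff_C_mul, ← pow_add, add_comm i]

lemma PowerSeries.coeff_zero_pow_of_eq_X_mul_eval₂ (k : ℕ) :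
    coeff 0 (Y ^ k) = (1 : S[T;T⁻¹]).coeff k := by
  have h0 : constantCoeff Y = 0 := by rw [hY, map_mul, constantCoeff_X, zero_mul]
  rw [coeff_zero_eq_constantCoeff_apply, map_pow, h0, ← T_zero, T, AddMonoidAlgebra.coeff_single,
    Finsupp.single_apply]
  simp [zero_pow_eq, eq_comm]

lemma PowerSeries.coeff_succ_pow_succ_eq_coeff_laurentKernel_mul {n : ℕ} {H : S[T;T⁻¹]}
    (hH : ∀ m : ℕ, coeff n (Y ^ m) = H.coeff m) (j : ℕ) :
    coeff (n + 1) (Y ^ (j + 1)) = (φ.laurentKernel * H).coeff (j + 1 : ℕ) := by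
  rw [coeff_succ_pow_succ_of_eq_X_mul_eval₂ hY, φ.coeff_laurentKernel_mul]
  refine Finset.sum_congr rfl fun i _ => ?_
  dsimp only
  rw [hH]
  push_cast
  ring_nf

lemma PowerSeries.coeff_succ_pow_eq_coeff_laurentKernel_pow_mul_eulerDeriv [IsAddTorsionFree S]
    (n k : ℕ) :
    coeff (n + 1) (Y ^ k) = (φ.laurentKernel ^ n * eulerDeriv φ.laurentKernel).coeff k := by
  induction n generalizing k with
  | zero =>
    rcases k with _ | j
    · simp [coeff_eulerDeriv]
    rw [coeff_succ_pow_succ_eq_coeff_laurentKernel_mul hY (coeff_zero_pow_of_eq_X_mul_eval₂ hY),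
      mul_one, pow_zero, one_mul, coeff_eulerDeriv]
    rcases j with _ | j
    · simp
    rw [φ.coeff_laurentKernel_of_one_lt (by omega), smul_zero]
  | succ n ih =>
    rcases k with _ | j
    · rw [pow_zero, coeff_one, if_neg (n + 1).succ_ne_zero, Nat.cast_zero,
        coeff_zero_pow_mul_eulerDeriv]
    rw [coeff_succ_pow_succ_eq_coeff_laurentKernel_mul hY ih, pow_succ', mul_assoc]

theorem PowerSeries.nsmul_coeff_pow_of_eq_X_mul_eval₂ [IsAddTorsionFree S] (n k : ℕ) :
    (n + 1) • coeff (n + 1) (Y ^ k) = k • (φ.laurentKernel ^ (n + 1)).coeff k := by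
  rw [coeff_succ_pow_eq_coeff_laurentKernel_pow_mul_eulerDeriv hY,
    ← AddMonoidAlgebra.coeff_smul_apply, nsmul_pow_mul_eulerDeriv, coeff_eulerDeriv, natCast_zsmul]

end LagrangeInversion

lemma laurentKernel_eq_xyKernel :
    (Polynomial.C (1 + T (-1)) * (Polynomial.C (T 1) + Polynomial.X) *
      (1 + Polynomial.X)).laurentKernel = xyKernel S := by
  have hx : (LaurentPolynomial.C (T 1) * LaurentPolynomial.C (T (-1)) : S[T;T⁻¹][T;T⁻¹]) = 1 := by
    rw [← map_mul, ← T_add, add_neg_cancel, T_zero, map_one]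
  have hy : (T 1 * T (-1) : S[T;T⁻¹][T;T⁻¹]) = 1 := by
    rw [← T_add, add_neg_cancel, T_zero]
  simp only [Polynomial.laurentKernel, xyKernel, map_mul, map_add, map_one, Polynomial.toLaurent_C,
    Polynomial.toLaurent_X, invert_C, invert_T]
  linear_combination
    (1 + LaurentPolynomial.C (T (-1))) * (LaurentPolynomial.C (T 1) + T (-1)) * hy +
      (1 + T 1) * (1 - T (-1)) * hx

theorem laurent_kernel_coeff_general (Y : PowerSeries (LaurentPolynomial ℚ))
    (hY : Y = PowerSeries.X * PowerSeries.C (1 + T (-1)) *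
        (PowerSeries.C (T 1) + Y) * (1 + Y)) :
    ∀ (k : ℕ), 1 ≤ k → ∀ (n : ℕ) (m : ℤ),
      AddMonoidAlgebra.coeff (PowerSeries.coeff (n + 1) (Y ^ k)) m =
        (k : ℚ) / ((n : ℚ) + 1) *
          ∑ s ∈ Finset.range (n + 2),
            (intChoose ((n : ℤ) + 1) (s : ℤ) : ℚ) *
              (intChoose ((n : ℤ) + 1) ((k : ℤ) + (s : ℤ)) : ℚ) *
              (intChoose ((n : ℤ) + 1) ((s : ℤ) + m) : ℚ) := by
  intro k _ n m
  have : IsAddTorsionFree ℚ[T;T⁻¹] := .of_module_rat _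
  have hY_eval : Y = PowerSeries.X * (Polynomial.C (1 + T (-1)) *
      (Polynomial.C (T 1) + Polynomial.X) * (1 + Polynomial.X)).eval₂ PowerSeries.C Y := by
    conv_lhs => rw [hY]
    simp only [Polynomial.eval₂_mul, Polynomial.eval₂_add, Polynomial.eval₂_C, Polynomial.eval₂_X,
      Polynomial.eval₂_one]
    ring
  have h := congrArg (·.coeff m) (nsmul_coeff_pow_of_eq_X_mul_eval₂ hY_eval n k)
  simp only [AddMonoidAlgebra.coeff_smul_apply] at h
  rw [laurentKernel_eq_xyKernel, coeff_coeff_xyKernel_pow, nsmul_eq_mul, nsmul_eq_mul] at h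
  push_cast at h
  rw [div_mul_eq_mul_div, eq_div_iff (by positivity), mul_comm]
  exact h

/-- If `Y ∈ ℚ[x,x⁻¹][[u]]` has constant term `0` and satisfies
`Y = u (1 + x⁻¹)(x + Y)(1 + Y)`, then for all `k ≥ 1`, `n ≥ 0` and `m ∈ ℤ` the
coefficient of `x^m` in the coefficient of `u^{n+1}` of `Y^k` is
`(k/(n+1)) Σ_{s=0}^{n+1} C(n+1,s) C(n+1,k+s) C(n+1,s+m)`. -/
theorem laurent_kernel_coeff (Y : PowerSeries (LaurentPolynomial ℚ))
    (hY0 : PowerSeries.constantCoeff Y = 0)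
    (hY : Y = PowerSeries.X * PowerSeries.C (1 + T (-1)) *
        (PowerSeries.C (T 1) + Y) * (1 + Y)) :
    ∀ (k : ℕ), 1 ≤ k → ∀ (n : ℕ) (m : ℤ),
      AddMonoidAlgebra.coeff (PowerSeries.coeff (n + 1) (Y ^ k)) m =
        (k : ℚ) / ((n : ℚ) + 1) *
          ∑ s ∈ Finset.range (n + 2),
            (intChoose ((n : ℤ) + 1) (s : ℤ) : ℚ) *
              (intChoose ((n : ℤ) + 1) ((k : ℤ) + (s : ℤ)) : ℚ) *
              (intChoose ((n : ℤ) + 1) ((s : ℤ) + m) : ℚ) :=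
  laurent_kernel_coeff_general Y hY
end

section
/- Let R = ℚ[x, x⁻¹] and let Y ∈ R[[u]] be the unique formal power series with constant term 0 satisfying Y = u·(1 + x⁻¹)·(x + Y)·(1 + Y). For i, j, m ∈ ℕ let h(i,j,m) denote the number of quadrant walks of length m from (1,0) to (i,j), where walks use the eight steps (1,0), (0,1), (−1,0), (0,−1), (1,−1), (−1,1), and two distinguishable stay steps (0,0)₁, (0,0)₂, and a quadrant walk is a walk all of whose points lie in {(a,b) ∈ ℤ² : a ≥ 0 and b ≥ 0}. Then in R[[u]] the identity x²·Y − x⁻²·Y³ + x⁻³·Y² = u·x(x+1)·F + u·x⁻¹(x⁻¹+1)·G holds, where F = Σ_{m≥0} (Σ_{i≥0} h(i,0,m)·xⁱ)·uᵐ and G = Σ_{m≥0} (Σ_{j≥0} h(0,j,m)·x⁻ʲ)·uᵐ. -/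
/-!
Let `H(x, y; u) = ∑ₘ uᵐ ∑ x^i y^j ∈ ℚ[x, y][[u]]`, the inner sum running over the quadrant walks of
length `m`, ending at `(i, j)`. Appending one step to every quadrant walk gives the functional
equation `K(x, y) H(x, y) = x² y - u (y + y²) H(0, y) - u (x + x²) H(x, 0)` with kernel
`K(x, y) = x y - u (1 + x)(x + y)(1 + y)`. The coefficients of `H` are polynomials, so any pair
`(A, B)` of series may be substituted for `(x, y)` coefficientwise, keeping `u`; when
`K(A, B) = 0` this gives `A² B = u (B + B²) H(0, B) + u (A + A²) H(A, 0)`.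
The equation for `Y` says `K(x, Y) = 0`, and then also `K(x̄ Y, x̄) = 0 = K(x̄ Y, Y)`. Adding the
relations for the first two pairs and subtracting the third eliminates the unknown series
`H(0, Y)` and `H(x̄ Y, 0)`, which leaves the identity with `F = H(x, 0)` and `G = H(0, x̄)`.
-/

open PowerSeries LaurentPolynomial

/-- The eight steps: `(1,0), (0,1), (−1,0), (0,−1), (1,−1), (−1,1)` and two
distinguishable stay steps `(0,0)₁`, `(0,0)₂`. -/
def braidStep : Fin 8 → ℤ × ℤ :=
  ![(1, 0), (0, 1), (-1, 0), (0, -1), (1, -1), (-1, 1), (0, 0), (0, 0)]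

/-- The position after the first `i` steps of the walk `s`, started at `(1,0)`. -/
def walkPos (m : ℕ) (s : Fin m → Fin 8) (i : ℕ) : ℤ × ℤ :=
  (1, 0) + ∑ j ∈ Finset.univ.filter (fun j : Fin m => (j : ℕ) < i), braidStep (s j)

/-- `h(i,j,m)` as a function of the target: the number of quadrant walks of length `m`
from `(1,0)` to `target`, using the eight steps above, all of whose points lie in the
closed first quadrant. -/
noncomputable def quadrantWalkCount (m : ℕ) (target : ℤ × ℤ) : ℕ :=
  Nat.card {s : Fin m → Fin 8 //
    (∀ i : ℕ, i ≤ m → 0 ≤ (walkPos m s i).1 ∧ 0 ≤ (walkPos m s i).2) ∧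
    walkPos m s m = target}

/-- `F = Σ_m (Σ_i h(i,0,m) xⁱ) uᵐ`; the inner sum is finite since a walk of length `m`
starting at `(1,0)` ends at abscissa at most `m+1`. -/
noncomputable def walkSeriesF : PowerSeries (LaurentPolynomial ℚ) :=
  PowerSeries.mk fun m =>
    ∑ i ∈ Finset.range (m + 2), (quadrantWalkCount m ((i : ℤ), 0)) • T (i : ℤ)

/-- `G = Σ_m (Σ_j h(0,j,m) x⁻ʲ) uᵐ`. -/
noncomputable def walkSeriesG : PowerSeries (LaurentPolynomial ℚ) :=
  PowerSeries.mk fun m =>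
    ∑ j ∈ Finset.range (m + 2), (quadrantWalkCount m (0, (j : ℤ))) • T (-(j : ℤ))

namespace PowerSeries
variable {R S B : Type*} [CommRing R] [CommRing S] [CommRing B]

section DiscreteCoefficients
open WithPiTopology
variable [UniformSpace S] [DiscreteUniformity S] [UniformSpace B] [DiscreteUniformity B]

theorem coeff_eval₂Hom_X (φ : S →+* B⟦X⟧) (f : S⟦X⟧) (n : ℕ) :
    coeff n (eval₂Hom (φ := φ) continuous_of_discreteTopology HasEval.X f) =
      ∑ d ∈ Finset.range (n + 1), coeff (n - d) (φ (coeff d f)) := by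
  have h := (hasSum_eval₂ (φ := φ) continuous_of_discreteTopology HasEval.X f).map (coeff n)
    (continuous_coeff B n)
  rw [coe_eval₂Hom]
  refine h.unique (hasSum_sum_of_ne_finset_zero fun d hd => ?_) |>.trans
    (Finset.sum_congr rfl fun d hd => ?_)
  · simp only [Function.comp_apply, coeff_mul_X_pow', Finset.mem_range] at hd ⊢
    rw [if_neg (by omega)]
  · simp only [Function.comp_apply, coeff_mul_X_pow', Finset.mem_range] at hd ⊢
    rw [if_pos (by omega)]

end DiscreteCoefficients

/-- `∑ fₘ uᵐ ↦ ∑ φ(fₘ) uᵐ`, which converges `u`-adically for every `φ`: evaluation at `X` for the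
discrete topologies on `S` and `B`. -/
noncomputable def evalCoeffs (φ : S →+* B⟦X⟧) : S⟦X⟧ →+* B⟦X⟧ :=
  letI : UniformSpace S := ⊥
  letI : UniformSpace B := ⊥
  haveI : DiscreteUniformity S := ⟨rfl⟩
  haveI : DiscreteUniformity B := ⟨rfl⟩
  open WithPiTopology in eval₂Hom (φ := φ) continuous_of_discreteTopology HasEval.X

theorem coeff_evalCoeffs (φ : S →+* B⟦X⟧) (f : S⟦X⟧) (n : ℕ) :
    coeff n (evalCoeffs φ f) = ∑ d ∈ Finset.range (n + 1), coeff (n - d) (φ (coeff d f)) :=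
  letI : UniformSpace S := ⊥
  letI : UniformSpace B := ⊥
  haveI : DiscreteUniformity S := ⟨rfl⟩
  haveI : DiscreteUniformity B := ⟨rfl⟩
  open WithPiTopology in coeff_eval₂Hom_X φ f n

theorem evalCoeffs_C (φ : S →+* B⟦X⟧) (a : S) : evalCoeffs φ (C a) = φ a := by
  ext n
  rw [coeff_evalCoeffs, Finset.sum_eq_single_of_mem 0 (by simp)]
  · simp
  · intro d _ hd
    simp [coeff_C, hd]

theorem evalCoeffs_X (φ : S →+* B⟦X⟧) : evalCoeffs φ X = X := by
  ext n
  rw [coeff_evalCoeffs]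
  rcases n with _ | n
  · simp
  · rw [Finset.sum_eq_single_of_mem 1 (by simp)]
    · simp [coeff_X]
    · intro d _ hd
      simp [coeff_X, hd]

theorem evalCoeffs_map (φ : S →+* B⟦X⟧) (ψ : R →+* S) (f : R⟦X⟧) :
    evalCoeffs φ (map ψ f) = evalCoeffs (φ.comp ψ) f := by
  ext n
  simp only [coeff_evalCoeffs, coeff_map, RingHom.comp_apply]

theorem evalCoeffs_C_comp (ρ : S →+* B) (f : S⟦X⟧) :
    evalCoeffs (C.comp ρ) f = map ρ f := by
  ext n
  rw [coeff_evalCoeffs, coeff_map, Finset.sum_eq_single_of_mem n (Finset.self_mem_range_succ n)]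
  · simp
  · intro d hd hdn
    rw [Finset.mem_range] at hd
    simp [coeff_C, show n - d ≠ 0 by omega]

end PowerSeries

open Finset
open MvPolynomial (aeval)

section Walks

variable {m : ℕ}

def quadrantWalks (m : ℕ) : Finset (Fin m → Fin 8) :=
  univ.filter fun s => ∀ i ≤ m, 0 ≤ walkPos m s i

theorem walkPos_snoc_of_le (s : Fin m → Fin 8) (k : Fin 8) {i : ℕ} (hi : i ≤ m) :
    walkPos (m + 1) (Fin.snoc s k) i = walkPos m s i := by
  unfold walkPos
  rw [sum_filter, sum_filter, Fin.sum_univ_castSucc]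
  simp [Nat.not_lt.mpr hi]

theorem walkPos_snoc_self (s : Fin m → Fin 8) (k : Fin 8) :
    walkPos (m + 1) (Fin.snoc s k) (m + 1) = walkPos m s m + braidStep k := by
  unfold walkPos
  rw [filter_true_of_mem fun j _ => j.isLt, filter_true_of_mem fun j _ => j.isLt,
    Fin.sum_univ_castSucc]
  simp [add_assoc]

theorem snoc_mem_quadrantWalks {s : Fin m → Fin 8} {k : Fin 8} :
    Fin.snoc s k ∈ quadrantWalks (m + 1) ↔
      s ∈ quadrantWalks m ∧ 0 ≤ walkPos m s m + braidStep k := by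
  simp only [quadrantWalks, mem_filter, mem_univ, true_and]
  constructor
  · intro h
    refine ⟨fun i hi => ?_, ?_⟩
    · simpa [walkPos_snoc_of_le s k hi] using h i (by omega)
    · simpa [walkPos_snoc_self] using h (m + 1) le_rfl
  · rintro ⟨hs, hk⟩ i hi
    rcases Nat.lt_or_eq_of_le hi with hi | rfl
    · simpa [walkPos_snoc_of_le s k (Nat.lt_succ_iff.mp hi)] using hs i (by omega)
    · simpa [walkPos_snoc_self] using hk

theorem walkPos_nonneg_of_mem {s : Fin m → Fin 8} (hs : s ∈ quadrantWalks m) : 0 ≤ walkPos m s m :=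
  (mem_filter.mp hs).2 m le_rfl

theorem sum_quadrantWalks_succ {M : Type*} [AddCommMonoid M] (f : ℤ × ℤ → M) :
    ∑ s ∈ quadrantWalks (m + 1), f (walkPos (m + 1) s (m + 1)) =
      ∑ s ∈ quadrantWalks m, ∑ k : Fin 8,
        if 0 ≤ walkPos m s m + braidStep k then f (walkPos m s m + braidStep k) else 0 := by
  classical
  rw [← univ_inter (quadrantWalks _), ← sum_ite_mem, ← (Fin.snocEquiv _).sum_comp,
    Fintype.sum_prod_type, sum_comm, ← univ_inter (quadrantWalks m), ← sum_ite_mem]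
  refine sum_congr rfl fun s _ => ?_
  have hsnoc (k : Fin 8) : Fin.snocEquiv (fun _ => Fin 8) (k, s) = Fin.snoc s k :=
    funext (Fin.snocEquiv_apply _ _)
  by_cases hs : s ∈ quadrantWalks m <;>
    simp [hsnoc, snoc_mem_quadrantWalks, walkPos_snoc_self, hs]

theorem walkPos_le (s : Fin m → Fin 8) (i : ℕ) : walkPos m s i ≤ ((m : ℤ) + 1, (m : ℤ)) := by
  have hstep : ∀ k, braidStep k ≤ (1, 1) := by decide
  calc walkPos m s i ≤ (1, 0) + m • (1, 1) :=
        add_le_add_right ((sum_le_card_nsmul _ _ _ fun j _ => hstep (s j)).trans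
          (nsmul_le_nsmul_left (by decide) ((card_filter_le _ _).trans (by simp)))) _
    _ = ((m : ℤ) + 1, (m : ℤ)) := by simp [add_comm]

theorem quadrantWalkCount_eq_card (t : ℤ × ℤ) :
    quadrantWalkCount m t = #{s ∈ quadrantWalks m | walkPos m s m = t} := by
  classical
  rw [quadrantWalkCount, Nat.card_eq_fintype_card, Fintype.card_subtype, quadrantWalks,
    filter_filter]
  rfl

theorem sum_quadrantWalks_eq_sum_count {M : Type*} [AddCommMonoid M] (f : ℤ × ℤ → M) :
    ∑ s ∈ quadrantWalks m, f (walkPos m s m) =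
      ∑ p ∈ range (m + 2) ×ˢ range (m + 2),
        quadrantWalkCount m (p.1, p.2) • f ((p.1 : ℤ), (p.2 : ℤ)) := by
  classical
  have hmaps : ∀ s ∈ quadrantWalks m,
      ((walkPos m s m).1.toNat, (walkPos m s m).2.toNat) ∈ range (m + 2) ×ˢ range (m + 2) := by
    intro s _
    have h := walkPos_le s m
    rw [Prod.le_def] at h
    simp only [mem_product, mem_range]
    omega
  rw [← sum_fiberwise_of_maps_to hmaps]
  refine sum_congr rfl fun p _ => ?_
  have hfiber : {s ∈ quadrantWalks m | ((walkPos m s m).1.toNat, (walkPos m s m).2.toNat) = p}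
      = {s ∈ quadrantWalks m | walkPos m s m = ((p.1 : ℤ), (p.2 : ℤ))} := by
    refine filter_congr fun s hs => ?_
    have h := walkPos_nonneg_of_mem hs
    rw [Prod.le_def, Prod.fst_zero, Prod.snd_zero] at h
    simp only [Prod.ext_iff]
    omega
  rw [hfiber, sum_congr rfl fun s hs => by rw [(mem_filter.mp hs).2], sum_const,
    quadrantWalkCount_eq_card]

end Walks

section GeneratingFunction

variable (R : Type*) [CommRing R]

local notation "𝐱" => (MvPolynomial.X 0 : MvPolynomial (Fin 2) R)
local notation "𝐲" => (MvPolynomial.X 1 : MvPolynomial (Fin 2) R)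

noncomputable def latticeMonomial (p : ℤ × ℤ) : MvPolynomial (Fin 2) R :=
  𝐱 ^ p.1.toNat * 𝐲 ^ p.2.toNat

/-- `x y S(x, y)`, where `S(x, y) = ∑ₖ x^{dₖ.1} y^{dₖ.2}` is the inventory of `braidStep`. -/
noncomputable def stepPoly : MvPolynomial (Fin 2) R := (1 + 𝐱) * (𝐱 + 𝐲) * (1 + 𝐲)

noncomputable def walkPoly (m : ℕ) : MvPolynomial (Fin 2) R :=
  ∑ s ∈ quadrantWalks m, latticeMonomial R (walkPos m s m)

variable {R}

/-- The steps leaving the quadrant from `(a, b)` are those with `dx = -1` when `a = 0`, of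
weights `y, y²`, and those with `dy = -1` when `b = 0`, of weights `x, x²`. -/
theorem mul_sum_latticeMonomial_step (a b : ℕ) :
    𝐱 * 𝐲 * ∑ k : Fin 8, (if 0 ≤ ((a : ℤ), (b : ℤ)) + braidStep k then
        latticeMonomial R (((a : ℤ), (b : ℤ)) + braidStep k) else 0) =
      stepPoly R * (𝐱 ^ a * 𝐲 ^ b) - (𝐲 + 𝐲 ^ 2) * aeval ![0, 𝐲] (𝐱 ^ a * 𝐲 ^ b)
        - (𝐱 + 𝐱 ^ 2) * aeval ![𝐱, 0] (𝐱 ^ a * 𝐲 ^ b) := by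
  have h1 (n : ℕ) : (0 : ℤ) ≤ n + 1 := by omega
  have h2 (n : ℕ) : (0 : ℤ) ≤ n + 1 + 1 := by omega
  have h3 (n : ℕ) : ((n : ℤ) + 1 + 1).toNat = n + 2 := by omega
  rcases a with _ | a <;> rcases b with _ | b <;>
    simp [Fin.sum_univ_eight, braidStep, latticeMonomial, stepPoly, Prod.le_def, h1, h2, h3] <;>
    ring

theorem walkPoly_zero : walkPoly R 0 = 𝐱 := by
  simp [walkPoly, quadrantWalks, walkPos, latticeMonomial, Prod.le_def]

theorem walkPoly_succ (m : ℕ) :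
    𝐱 * 𝐲 * walkPoly R (m + 1) = stepPoly R * walkPoly R m
      - (𝐲 + 𝐲 ^ 2) * aeval ![0, 𝐲] (walkPoly R m)
      - (𝐱 + 𝐱 ^ 2) * aeval ![𝐱, 0] (walkPoly R m) := by
  rw [walkPoly, walkPoly, sum_quadrantWalks_succ, mul_sum, map_sum, map_sum, mul_sum, mul_sum,
    mul_sum, ← sum_sub_distrib, ← sum_sub_distrib]
  refine sum_congr rfl fun s hs => ?_
  obtain ⟨a, b, hab⟩ : ∃ a b : ℕ, walkPos m s m = ((a : ℤ), (b : ℤ)) := by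
    have h := walkPos_nonneg_of_mem hs
    rw [Prod.le_def] at h
    exact ⟨_, _, Prod.ext (Int.toNat_of_nonneg h.1).symm (Int.toNat_of_nonneg h.2).symm⟩
  rw [hab, mul_sum_latticeMonomial_step]
  simp [latticeMonomial]

variable (R) in
noncomputable def walkSeries : (MvPolynomial (Fin 2) R)⟦X⟧ := mk (walkPoly R)

theorem walkSeries_functional_equation :
    PowerSeries.C (𝐱 * 𝐲) * walkSeries R = PowerSeries.C (𝐱 ^ 2 * 𝐲)
      + X * (PowerSeries.C (stepPoly R) * walkSeries R
        - PowerSeries.C (𝐲 + 𝐲 ^ 2) * map (aeval ![0, 𝐲]).toRingHom (walkSeries R)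
        - PowerSeries.C (𝐱 + 𝐱 ^ 2) * map (aeval ![𝐱, 0]).toRingHom (walkSeries R)) := by
  refine PowerSeries.ext fun n => ?_
  rcases n with _ | m
  · simp [walkSeries, walkPoly_zero]
    ring
  · rw [map_add, coeff_C, if_neg m.succ_ne_zero, zero_add, coeff_succ_X_mul]
    simp only [map_sub, coeff_C_mul, coeff_map, walkSeries, coeff_mk]
    exact walkPoly_succ m

end GeneratingFunction

section KernelMethod

variable {R B : Type*} [CommRing R] [CommRing B] [Algebra R B]

theorem aeval_walkPoly (v : Fin 2 → B) (m : ℕ) :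
    aeval v (walkPoly R m) = ∑ p ∈ range (m + 2) ×ˢ range (m + 2),
      quadrantWalkCount m (p.1, p.2) • (v 0 ^ p.1 * v 1 ^ p.2) := by
  rw [walkPoly, map_sum, sum_quadrantWalks_eq_sum_count fun p => aeval v (latticeMonomial R p)]
  simp [latticeMonomial]

theorem evalCoeffs_aeval_C (v : Fin 2 → B) (f : (MvPolynomial (Fin 2) R)⟦X⟧) :
    evalCoeffs (aeval (R := R) fun i => PowerSeries.C (v i)).toRingHom f =
      map (aeval (R := R) v).toRingHom f := by
  have hφ : (aeval (R := R) fun i => PowerSeries.C (v i)).toRingHom =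
      PowerSeries.C.comp (aeval v).toRingHom :=
    MvPolynomial.ringHom_ext (fun r => by simp [PowerSeries.algebraMap_apply]) (fun i => by simp)
  rw [hφ, evalCoeffs_C_comp]

theorem sq_mul_eq_of_kernel {A V : B⟦X⟧} (hk : A * V = X * ((1 + A) * (A + V) * (1 + V))) :
    A ^ 2 * V = X * (V + V ^ 2) * evalCoeffs (aeval (R := R) ![0, V]).toRingHom (walkSeries R)
      + X * (A + A ^ 2) * evalCoeffs (aeval (R := R) ![A, 0]).toRingHom (walkSeries R) := by
  have hcomp (w : Fin 2 → MvPolynomial (Fin 2) R) :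
      (aeval (R := R) ![A, V]).toRingHom.comp (aeval w).toRingHom =
        (aeval (R := R) fun i => aeval ![A, V] (w i)).toRingHom := by
    rw [← MvPolynomial.comp_aeval]; rfl
  have hyAxis : (fun i => aeval (R := R) ![A, V] (![0, MvPolynomial.X 1] i)) = ![0, V] := by
    ext i; fin_cases i <;> simp
  have hxAxis : (fun i => aeval (R := R) ![A, V] (![MvPolynomial.X 0, 0] i)) = ![A, 0] := by
    ext i; fin_cases i <;> simp
  have h := congrArg (evalCoeffs (aeval (R := R) ![A, V]).toRingHom)
    walkSeries_functional_equation
  simp only [map_mul, map_add, map_sub, map_pow, evalCoeffs_C, evalCoeffs_X, evalCoeffs_map] at h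
  rw [hcomp, hcomp, hxAxis, hyAxis] at h
  have hA : (aeval (R := R) ![A, V]).toRingHom (MvPolynomial.X 0) = A := by simp
  have hV : (aeval (R := R) ![A, V]).toRingHom (MvPolynomial.X 1) = V := by simp
  simp only [stepPoly, map_add, map_mul, map_one, hA, hV] at h
  linear_combination evalCoeffs (aeval (R := R) ![A, V]).toRingHom (walkSeries R) * hk - h

end KernelMethod

section Specialization

theorem evalCoeffs_walkSeries_eq_walkSeriesF :
    evalCoeffs (aeval (R := ℚ) ![PowerSeries.C (T 1 : LaurentPolynomial ℚ), 0]).toRingHom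
      (walkSeries ℚ) = walkSeriesF := by
  have hv : ![PowerSeries.C (T 1 : LaurentPolynomial ℚ), 0] =
      fun i => PowerSeries.C (![T 1, 0] i) := by
    ext1 i; fin_cases i <;> simp
  rw [hv, evalCoeffs_aeval_C]
  refine PowerSeries.ext fun m => ?_
  rw [coeff_map, walkSeries, coeff_mk, walkSeriesF, coeff_mk, AlgHom.toRingHom_eq_coe,
    RingHom.coe_coe, aeval_walkPoly, sum_product]
  refine sum_congr rfl fun i _ => ?_
  rw [sum_eq_single_of_mem 0 (by simp)]
  · simp [T_pow]
  · intro j _ hj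
    simp [hj]

theorem evalCoeffs_walkSeries_eq_walkSeriesG :
    evalCoeffs (aeval (R := ℚ) ![0, PowerSeries.C (T (-1) : LaurentPolynomial ℚ)]).toRingHom
      (walkSeries ℚ) = walkSeriesG := by
  have hv : ![0, PowerSeries.C (T (-1) : LaurentPolynomial ℚ)] =
      fun i => PowerSeries.C (![0, T (-1)] i) := by
    ext1 i; fin_cases i <;> simp
  rw [hv, evalCoeffs_aeval_C]
  refine PowerSeries.ext fun m => ?_
  rw [coeff_map, walkSeries, coeff_mk, walkSeriesG, coeff_mk, AlgHom.toRingHom_eq_coe,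
    RingHom.coe_coe, aeval_walkPoly, sum_product_right]
  refine sum_congr rfl fun j _ => ?_
  rw [sum_eq_single_of_mem 0 (by simp)]
  · simp [T_pow]
  · intro i _ hi
    simp [hi]

end Specialization

/-- `Φ (x, y) = (y / x, y)` and `Ψ (x, y) = (x, x / y)` preserve the kernel
`x y - u (1 + x) (x + y) (1 + y)`; the three pairs are `(x, Y)`, `Φ (x, Y)` and `Ψ (Φ (x, Y))`. -/
theorem kernel_orbit {K : Type*} [CommRing K] {u x x' Y : K} (hx : x * x' = 1)
    (hY : Y = u * (1 + x') * (x + Y) * (1 + Y)) :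
    x * Y = u * ((1 + x) * (x + Y) * (1 + Y)) ∧
      x' * Y * x' = u * ((1 + x' * Y) * (x' * Y + x') * (1 + x')) ∧
      x' * Y * Y = u * ((1 + x' * Y) * (x' * Y + Y) * (1 + Y)) :=
  ⟨by linear_combination x * hY + u * (x + Y) * (1 + Y) * hx,
    by linear_combination x' * x' * hY + u * (1 + x') * (1 + Y) * x' * hx,
    by linear_combination x' * Y * hY + u * (1 + Y) * (1 + x') * Y * hx⟩

theorem kernel_identity_general (Y : PowerSeries (LaurentPolynomial ℚ))
    (hY : Y = PowerSeries.X * PowerSeries.C (R := LaurentPolynomial ℚ) (1 + T (-1)) *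
        (PowerSeries.C (R := LaurentPolynomial ℚ) (T 1) + Y) * (1 + Y)) :
    PowerSeries.C (R := LaurentPolynomial ℚ) (T 2) * Y -
        PowerSeries.C (R := LaurentPolynomial ℚ) (T (-2)) * Y ^ 3 +
        PowerSeries.C (R := LaurentPolynomial ℚ) (T (-3)) * Y ^ 2 =
      PowerSeries.X * PowerSeries.C (R := LaurentPolynomial ℚ) (T 1 * (T 1 + 1)) * walkSeriesF +
        PowerSeries.X * PowerSeries.C (R := LaurentPolynomial ℚ) (T (-1) * (T (-1) + 1)) *
          walkSeriesG := by
  set x := PowerSeries.C (R := LaurentPolynomial ℚ) (T 1)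
  set x' := PowerSeries.C (R := LaurentPolynomial ℚ) (T (-1))
  have hx : x * x' = 1 := by rw [← map_mul, ← T_add]; simp
  obtain ⟨k₁, k₂, k₃⟩ := kernel_orbit hx (by simpa using hY)
  have e₁ := sq_mul_eq_of_kernel (R := ℚ) k₁
  have e₂ := sq_mul_eq_of_kernel (R := ℚ) k₂
  have e₃ := sq_mul_eq_of_kernel (R := ℚ) k₃
  rw [evalCoeffs_walkSeries_eq_walkSeriesF] at e₁
  rw [evalCoeffs_walkSeries_eq_walkSeriesG] at e₂
  have hx2 : PowerSeries.C (R := LaurentPolynomial ℚ) (T 2) = x ^ 2 := by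
    rw [← map_pow, T_pow]; norm_num
  have hx'2 : PowerSeries.C (R := LaurentPolynomial ℚ) (T (-2)) = x' ^ 2 := by
    rw [← map_pow, T_pow]; norm_num
  have hx'3 : PowerSeries.C (R := LaurentPolynomial ℚ) (T (-3)) = x' ^ 3 := by
    rw [← map_pow, T_pow]; norm_num
  simp only [hx2, hx'2, hx'3, map_mul, map_add, map_one]
  linear_combination e₁ + e₂ - e₃

/-- The kernel identity: if `Y ∈ ℚ[x,x⁻¹][[u]]` has constant term `0` and satisfies
`Y = u (1 + x⁻¹)(x + Y)(1 + Y)`, then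
`x² Y − x⁻² Y³ + x⁻³ Y² = u x(x+1) F + u x⁻¹(x⁻¹+1) G`. -/
theorem kernel_identity (Y : PowerSeries (LaurentPolynomial ℚ))
    (hY0 : PowerSeries.constantCoeff (R := LaurentPolynomial ℚ) Y = 0)
    (hY : Y = PowerSeries.X * PowerSeries.C (R := LaurentPolynomial ℚ) (1 + T (-1)) *
        (PowerSeries.C (R := LaurentPolynomial ℚ) (T 1) + Y) * (1 + Y)) :
    PowerSeries.C (R := LaurentPolynomial ℚ) (T 2) * Y -
        PowerSeries.C (R := LaurentPolynomial ℚ) (T (-2)) * Y ^ 3 +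
        PowerSeries.C (R := LaurentPolynomial ℚ) (T (-3)) * Y ^ 2 =
      PowerSeries.X * PowerSeries.C (R := LaurentPolynomial ℚ) (T 1 * (T 1 + 1)) * walkSeriesF +
        PowerSeries.X * PowerSeries.C (R := LaurentPolynomial ℚ) (T (-1) * (T (-1) + 1)) *
          walkSeriesG :=
  kernel_identity_general Y hY
end
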